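/- arXiv:1107.1871 — 5 statements merged into one kernel-verified Lean document; each statement's English description precedes it below -/
import Mathlib

section
/- Let d ≥ 2 be an even integer and e = d/2, and let i, j ≥ 0 be integers; when j > i, suppose additionally that e does not divide j − i. Then: B_d(q^{i+e} + q^j) − B_d(q^i − q^j) equals d if i > j and equals 0 if i < j; and B_d(q^{i+e} − q^j) − B_d(q^i + q^j) equals d if i − j > −e and equals 0 if i − j < −e. -/
open Polynomial

/-- `φ_d(r)`: for `r = 1` it is `1/2`; for `r ≥ 2` it is the number of integers `j` with
`1 ≤ j ≤ r / d` that are coprime to `r`. -/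
noncomputable def phiD (d r : ℕ) : ℚ :=
  if r = 1 then 1 / 2
  else (((Finset.Icc 1 (r / d)).filter fun j => Nat.gcd j r = 1).card : ℚ)

/-- `B_d(f)` for `f` a rational constant times a power of `q` times a product of cyclotomic
polynomials: if `f = c·q^a·∏_{r≥1} Φ_r^{m_r}`, then `B_d(f) = 2a + Σ_r m_r·(φ(r) + d·φ_d(r))`.
The exponents are recovered as multiplicities; since `Φ_r ∣ f` forces
`φ(r) ≤ deg f` and `r ≤ 2·φ(r)²`, the sum below captures every relevant `r`. -/
noncomputable def Bd (d : ℕ) (f : Polynomial ℚ) : ℚ :=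
  2 * (multiplicity X f : ℚ) +
    ∑ r ∈ Finset.Icc 1 (2 * f.natDegree ^ 2 + 1),
      (multiplicity (cyclotomic r ℚ) f : ℚ) * ((Nat.totient r : ℚ) + d * phiD d r)

/-!
Over `ℚ`, `q^m - 1 = ∏_{r ∣ m} Φ_r` and `q^m + 1 = ∏_{r ∣ 2m, r ∤ m} Φ_r`, so `B_d(q^a ± q^b)` is a
sum over divisors. There `Σ_{r ∣ m} φ(r) = m` and `Σ_{r ∣ m} φ_d(r) = 1/2 + ⌊m/d⌋`: sorting the
`k ≤ m/d` by `r = m / gcd(k, m)` leaves exactly the `k / gcd(k, m) ≤ r/d` coprime to `r`.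
Hence `B_d(q^a - q^b) = a + b + d/2 + d⌊(a-b)/d⌋` for `b < a`; for `d = 2e`, Hermite's identity
`⌊m/e⌋ = ⌊m/2e⌋ + ⌊(m+e)/2e⌋` turns `B_d(q^a + q^b)` into `a + b + d⌊(a-b+e)/d⌋` for `b ≤ a`.
Each of the four differences is then a comparison of two such floors.
-/

open Finset
open scoped Nat

theorem Nat.div_two_mul_add_div_two_mul (m e : ℕ) : m / (2 * e) + (m + e) / (2 * e) = m / e := by
  rcases e.eq_zero_or_pos with rfl | he
  · simp
  rw [mul_comm, ← Nat.div_div_eq_div_mul, ← Nat.div_div_eq_div_mul, Nat.add_div_right _ he]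
  omega

theorem Nat.divisors_subset_Icc_of_le {n k : ℕ} (h : n ≤ 2 * k) :
    n.divisors ⊆ Icc 1 (2 * k ^ 2 + 1) := by
  intro r hr
  have hr0 : 0 < r := Nat.pos_of_mem_divisors hr
  have hrn : r ≤ n := Nat.divisor_le hr
  rw [mem_Icc]
  constructor <;> nlinarith

theorem Nat.sum_divisors_card_filter_coprime_Icc_div {d : ℕ} (hd : 0 < d) (m : ℕ) :
    ∑ r ∈ m.divisors, #{j ∈ Icc 1 (r / d) | j.gcd r = 1} = m / d := by
  rcases m.eq_zero_or_pos with rfl | hm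
  · simp
  rw [← Finset.card_sigma, ← Nat.add_sub_cancel (m / d) 1, ← Nat.card_Icc 1 (m / d)]
  refine card_nbij' (fun p => p.2 * (m / p.1)) (fun k => ⟨m / k.gcd m, k / k.gcd m⟩)
    ?_ ?_ ?_ ?_
  · rintro ⟨r, j⟩ hp
    simp only [coe_sigma, Set.mem_sigma_iff, mem_coe, Nat.mem_divisors, mem_filter, mem_Icc] at hp
    obtain ⟨⟨⟨t, rfl⟩, -⟩, ⟨hj, hjr⟩, -⟩ := hp
    have ht : 0 < t := Nat.pos_of_mul_pos_left hm
    simp only [coe_Icc, Set.mem_Icc, Nat.mul_div_cancel_left t (Nat.pos_of_mul_pos_right hm)]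
    refine ⟨Nat.mul_pos hj ht, ?_⟩
    rw [Nat.le_div_iff_mul_le hd, mul_right_comm]
    exact Nat.mul_le_mul_right t ((Nat.le_div_iff_mul_le hd).1 hjr)
  · intro k hk
    simp only [coe_Icc, Set.mem_Icc] at hk
    have hg : 0 < k.gcd m := Nat.gcd_pos_of_pos_right k hm
    simp only [coe_sigma, Set.mem_sigma_iff, mem_coe, Nat.mem_divisors, mem_filter, mem_Icc]
    refine ⟨⟨Nat.div_dvd_of_dvd (Nat.gcd_dvd_right k m), hm.ne'⟩,
      ⟨Nat.div_pos (Nat.le_of_dvd (by omega) (Nat.gcd_dvd_left k m)) hg, ?_⟩,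
      Nat.coprime_div_gcd_div_gcd hg⟩
    rw [Nat.div_right_comm]
    exact Nat.div_le_div_right hk.2
  · rintro ⟨r, j⟩ hp
    simp only [coe_sigma, Set.mem_sigma_iff, mem_coe, Nat.mem_divisors, mem_filter, mem_Icc] at hp
    obtain ⟨⟨⟨t, rfl⟩, -⟩, -, hjr⟩ := hp
    have ht : 0 < t := Nat.pos_of_mul_pos_left hm
    have hr : 0 < r := Nat.pos_of_mul_pos_right hm
    simp only [Nat.mul_div_cancel_left t hr, Nat.gcd_mul_right, hjr, one_mul,
      Nat.mul_div_cancel _ ht]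
  · intro k _
    simp only [Nat.div_div_self (Nat.gcd_dvd_right k m) hm.ne',
      Nat.div_mul_cancel (Nat.gcd_dvd_left k m)]

section

variable {K : Type*} [Field K]

theorem Polynomial.Monic.emultiplicity_eq_zero_of_irreducible_ne {p q : K[X]} (hp : p.Monic)
    (hq : q.Monic) (hpi : Irreducible p) (hqi : Irreducible q) (hne : p ≠ q) :
    emultiplicity p q = 0 :=
  emultiplicity_eq_zero.2 fun hpq =>
    hne (eq_of_monic_of_associated hp hq (hpi.associated_of_dvd hqi hpq))

theorem Polynomial.emultiplicity_C_mul_X_pow_mul_prod {p : K[X]} (hp : Prime p) {c : K}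
    (hc : c ≠ 0) (a : ℕ) {ι : Type*} (s : Finset ι) (Q : ι → K[X]) :
    emultiplicity p (C c * X ^ a * ∏ i ∈ s, Q i) =
      a * emultiplicity p X + ∑ i ∈ s, emultiplicity p (Q i) := by
  rw [emultiplicity_mul hp, emultiplicity_mul hp,
    emultiplicity_of_isUnit_right hp.not_isUnit (isUnit_C.2 hc.isUnit), zero_add,
    emultiplicity_pow hp, Finset.emultiplicity_prod hp]

theorem Polynomial.cyclotomic_ne_X {r : ℕ} (hr : 0 < r) : cyclotomic r K ≠ X := by
  intro h
  have := cyclotomic.dvd_X_pow_sub_one r K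
  rw [h, X_dvd_iff] at this
  simp [hr.ne] at this

end

theorem Polynomial.multiplicity_X_C_mul_X_pow_mul_prod_cyclotomic {c : ℚ} (hc : c ≠ 0) (a : ℕ)
    {D : Finset ℕ} (hD : 0 ∉ D) :
    multiplicity X (C c * X ^ a * ∏ r ∈ D, cyclotomic r ℚ) = a := by
  refine multiplicity_eq_of_emultiplicity_eq_some ?_
  rw [emultiplicity_C_mul_X_pow_mul_prod prime_X hc,
    (FiniteMultiplicity.of_prime_left prime_X X_ne_zero).emultiplicity_self, mul_one,
    sum_eq_zero, add_zero]
  intro r hr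
  have hr : 0 < r := Nat.pos_of_ne_zero (ne_of_mem_of_not_mem hr hD)
  exact monic_X.emultiplicity_eq_zero_of_irreducible_ne (cyclotomic.monic r ℚ) irreducible_X
    (cyclotomic.irreducible_rat hr) (cyclotomic_ne_X hr).symm

theorem Polynomial.multiplicity_cyclotomic_C_mul_X_pow_mul_prod_cyclotomic {c : ℚ} (hc : c ≠ 0)
    (a : ℕ) {D : Finset ℕ} (hD : 0 ∉ D) {r : ℕ} (hr : 0 < r) :
    multiplicity (cyclotomic r ℚ) (C c * X ^ a * ∏ s ∈ D, cyclotomic s ℚ) =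
      if r ∈ D then 1 else 0 := by
  have hirr := cyclotomic.irreducible_rat hr
  have hmon := cyclotomic.monic r ℚ
  refine multiplicity_eq_of_emultiplicity_eq_some ?_
  rw [emultiplicity_C_mul_X_pow_mul_prod hirr.prime hc,
    hmon.emultiplicity_eq_zero_of_irreducible_ne monic_X hirr irreducible_X (cyclotomic_ne_X hr),
    mul_zero, zero_add]
  have hs : ∀ s ∈ D,
      emultiplicity (cyclotomic r ℚ) (cyclotomic s ℚ) = if r = s then 1 else 0 := by
    intro s hsD
    split_ifs with h
    · rw [← h]
      exact (FiniteMultiplicity.of_prime_left hirr.prime hmon.ne_zero).emultiplicity_self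
    · have hs : 0 < s := Nat.pos_of_ne_zero (ne_of_mem_of_not_mem hsD hD)
      exact hmon.emultiplicity_eq_zero_of_irreducible_ne (cyclotomic.monic s ℚ) hirr
        (cyclotomic.irreducible_rat hs) (cyclotomic_injective.ne h)
  rw [sum_congr rfl hs, sum_ite_eq]
  split_ifs <;> simp

theorem Polynomial.prod_cyclotomic_sdiff_eq_X_pow_add_one {R : Type*} [CommRing R] [IsDomain R]
    {m : ℕ} (hm : 0 < m) :
    ∏ r ∈ (2 * m).divisors \ m.divisors, cyclotomic r R = X ^ m + 1 := by
  have hsub : m.divisors ⊆ (2 * m).divisors :=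
    Nat.divisors_subset_of_dvd (by omega) (dvd_mul_left m 2)
  refine mul_right_cancel₀ (X_pow_sub_C_ne_zero hm (1 : R)) ?_
  rw [C_1]
  calc (∏ r ∈ (2 * m).divisors \ m.divisors, cyclotomic r R) * (X ^ m - 1)
      = ∏ r ∈ (2 * m).divisors, cyclotomic r R := by
        rw [← prod_cyclotomic_eq_X_pow_sub_one hm, prod_sdiff hsub]
    _ = (X ^ m + 1) * (X ^ m - 1) := by
        rw [prod_cyclotomic_eq_X_pow_sub_one (by omega)]
        ring

theorem Bd_neg (d : ℕ) (f : ℚ[X]) : Bd d (-f) = Bd d f := by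
  simp only [Bd, natDegree_neg, multiplicity_neg]

theorem Bd_C_mul_X_pow_mul_prod_cyclotomic (d a : ℕ) {c : ℚ} (hc : c ≠ 0) {D : Finset ℕ}
    (hD : D ⊆ Icc 1 (2 * (C c * X ^ a * ∏ r ∈ D, cyclotomic r ℚ).natDegree ^ 2 + 1)) :
    Bd d (C c * X ^ a * ∏ r ∈ D, cyclotomic r ℚ) =
      2 * a + ∑ r ∈ D, ((φ r : ℚ) + d * phiD d r) := by
  have hD0 : 0 ∉ D := fun h => by simpa using hD h
  have hsum : ∑ r ∈ D, ((φ r : ℚ) + d * phiD d r) =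
      ∑ r ∈ Icc 1 (2 * (C c * X ^ a * ∏ r ∈ D, cyclotomic r ℚ).natDegree ^ 2 + 1),
        if r ∈ D then (φ r : ℚ) + d * phiD d r else 0 := by
    rw [sum_ite_mem, inter_eq_right.2 hD]
  rw [Bd, multiplicity_X_C_mul_X_pow_mul_prod_cyclotomic hc a hD0, hsum]
  refine congrArg _ (sum_congr rfl fun r hr => ?_)
  rw [multiplicity_cyclotomic_C_mul_X_pow_mul_prod_cyclotomic hc a hD0 (by simp at hr; omega)]
  split_ifs <;> simp

theorem sum_divisors_phiD {d : ℕ} (hd : 2 ≤ d) {m : ℕ} (hm : 0 < m) :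
    ∑ r ∈ m.divisors, phiD d r = 1 / 2 + ((m / d : ℕ) : ℚ) := by
  have hsplit : ∀ r, phiD d r =
      (#{j ∈ Icc 1 (r / d) | j.gcd r = 1} : ℚ) + if r = 1 then 1 / 2 else 0 := by
    intro r
    by_cases hr : r = 1
    · simp [phiD, hr, Nat.div_eq_of_lt (by omega : 1 < d)]
    · simp [phiD, hr]
  rw [sum_congr rfl fun r _ => hsplit r, sum_add_distrib, ← Nat.cast_sum,
    Nat.sum_divisors_card_filter_coprime_Icc_div (by omega), sum_ite_eq',
    if_pos (Nat.one_mem_divisors.2 hm.ne')]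
  ring

theorem sum_divisors_totient_add_mul_phiD {d : ℕ} (hd : 2 ≤ d) {m : ℕ} (hm : 0 < m) :
    ∑ r ∈ m.divisors, ((φ r : ℚ) + d * phiD d r) = m + d * (1 / 2 + ((m / d : ℕ) : ℚ)) := by
  rw [sum_add_distrib, ← mul_sum, sum_divisors_phiD hd hm, ← Nat.cast_sum, Nat.sum_totient]

theorem Bd_X_pow_sub_X_pow {d : ℕ} (hd : 2 ≤ d) {a b : ℕ} (hba : b < a) :
    Bd d (X ^ a - X ^ b) = a + b + d * (1 / 2 + (((a - b) / d : ℕ) : ℚ)) := by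
  have hm : 0 < a - b := by omega
  have hdeg : (X ^ a - X ^ b : ℚ[X]).natDegree = a := by
    rw [natDegree_sub_eq_left_of_natDegree_lt] <;> simp [hba]
  have hfac : (X ^ a - X ^ b : ℚ[X]) =
      C 1 * X ^ b * ∏ r ∈ (a - b).divisors, cyclotomic r ℚ := by
    rw [prod_cyclotomic_eq_X_pow_sub_one hm, C_1, one_mul, mul_sub, mul_one, ← pow_add,
      Nat.add_sub_cancel' hba.le]
  rw [hfac] at hdeg ⊢
  rw [Bd_C_mul_X_pow_mul_prod_cyclotomic d b one_ne_zero
    (by rw [hdeg]; exact Nat.divisors_subset_Icc_of_le (by omega)),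
    sum_divisors_totient_add_mul_phiD hd hm, Nat.cast_sub hba.le]
  ring

theorem Bd_X_pow_add_X_pow {d : ℕ} (hd : 2 ≤ d) {a b : ℕ} (hba : b < a) :
    Bd d (X ^ a + X ^ b) =
      a + b + d * ((((2 * (a - b)) / d : ℕ) : ℚ) - (((a - b) / d : ℕ) : ℚ)) := by
  have hm : 0 < a - b := by omega
  have hdeg : (X ^ a + X ^ b : ℚ[X]).natDegree = a := by
    rw [natDegree_add_eq_left_of_natDegree_lt] <;> simp [hba]
  have hfac : (X ^ a + X ^ b : ℚ[X]) =
      C 1 * X ^ b * ∏ r ∈ (2 * (a - b)).divisors \ (a - b).divisors, cyclotomic r ℚ := by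
    rw [prod_cyclotomic_sdiff_eq_X_pow_add_one hm, C_1, one_mul, mul_add, mul_one, ← pow_add,
      Nat.add_sub_cancel' hba.le]
  have hsub : (a - b).divisors ⊆ (2 * (a - b)).divisors :=
    Nat.divisors_subset_of_dvd (by omega) (dvd_mul_left _ 2)
  rw [hfac] at hdeg ⊢
  rw [Bd_C_mul_X_pow_mul_prod_cyclotomic d b one_ne_zero
    (by rw [hdeg]; exact sdiff_subset.trans (Nat.divisors_subset_Icc_of_le (by omega))),
    sum_sdiff_eq_sub hsub, sum_divisors_totient_add_mul_phiD hd (by omega),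
    sum_divisors_totient_add_mul_phiD hd hm]
  push_cast [Nat.cast_sub hba.le]
  ring

theorem Bd_X_pow_add_X_pow_self (d a : ℕ) : Bd d (X ^ a + X ^ a) = 2 * a := by
  have h := Bd_C_mul_X_pow_mul_prod_cyclotomic d a two_ne_zero (D := ∅) (empty_subset _)
  rwa [prod_empty, mul_one, sum_empty, add_zero, C_ofNat, two_mul] at h

theorem Bd_X_pow_add_X_pow_of_even {d e : ℕ} (hde : d = 2 * e) (he : 0 < e) {a b : ℕ}
    (hba : b ≤ a) : Bd d (X ^ a + X ^ b) = a + b + d * (((a - b + e) / d : ℕ) : ℚ) := by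
  subst hde
  rcases hba.lt_or_eq with hba | rfl
  · rw [Bd_X_pow_add_X_pow (by omega) hba, Nat.mul_div_mul_left _ _ two_pos,
      ← Nat.div_two_mul_add_div_two_mul (a - b) e]
    push_cast
    ring
  · rw [Bd_X_pow_add_X_pow_self, Nat.sub_self, zero_add, Nat.div_eq_of_lt (by omega)]
    push_cast
    ring

theorem Bd_cohook_add_differences {d e : ℕ} (hde : d = 2 * e) (he : 0 < e) (i j : ℕ) :
    (j < i → Bd d (X ^ (i + e) + X ^ j) - Bd d (X ^ i - X ^ j) = d) ∧
      (i < j → Bd d (X ^ (i + e) + X ^ j) - Bd d (X ^ i - X ^ j) = 0) := by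
  subst hde
  constructor
  · intro hji
    rw [Bd_X_pow_add_X_pow_of_even rfl he (by omega), Bd_X_pow_sub_X_pow (by omega) hji,
      show i + e - j + e = i - j + 2 * e by omega, Nat.add_div_right _ (by omega)]
    push_cast
    ring
  · intro hij
    rw [← neg_sub (X ^ j : ℚ[X]), Bd_neg, Bd_X_pow_sub_X_pow (by omega) hij]
    rcases le_or_gt j (i + e) with hle | hlt
    · rw [Bd_X_pow_add_X_pow_of_even rfl he hle,
        Nat.div_eq_of_lt (by omega : i + e - j + e < 2 * e),
        Nat.div_eq_of_lt (by omega : j - i < 2 * e)]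
      push_cast
      ring
    · rw [add_comm (X ^ (i + e) : ℚ[X]), Bd_X_pow_add_X_pow_of_even rfl he hlt.le,
        show j - (i + e) + e = j - i by omega]
      push_cast
      ring

theorem Bd_cohook_sub_differences {d e : ℕ} (hde : d = 2 * e) (he : 0 < e) (i j : ℕ) :
    (j < i + e → Bd d (X ^ (i + e) - X ^ j) - Bd d (X ^ i + X ^ j) = d) ∧
      (i + e < j → Bd d (X ^ (i + e) - X ^ j) - Bd d (X ^ i + X ^ j) = 0) := by
  subst hde
  constructor
  · intro hji
    rw [Bd_X_pow_sub_X_pow (by omega) hji]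
    rcases le_or_gt j i with hle | hlt
    · rw [Bd_X_pow_add_X_pow_of_even rfl he hle, show i + e - j = i - j + e by omega]
      push_cast
      ring
    · rw [add_comm (X ^ i : ℚ[X]), Bd_X_pow_add_X_pow_of_even rfl he hlt.le,
        Nat.div_eq_of_lt (by omega : j - i + e < 2 * e),
        Nat.div_eq_of_lt (by omega : i + e - j < 2 * e)]
      push_cast
      ring
  · intro hij
    rw [← neg_sub (X ^ j : ℚ[X]), Bd_neg, Bd_X_pow_sub_X_pow (by omega) hij,
      add_comm (X ^ i : ℚ[X]), Bd_X_pow_add_X_pow_of_even rfl he (by omega),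
      show j - i + e = j - (i + e) + 2 * e by omega, Nat.add_div_right _ (by omega)]
    push_cast
    ring

theorem Bd_cohook_differences_general (d i j : ℕ) (hd : 2 ≤ d) (heven : d % 2 = 0) :
    ((j < i → Bd d (X ^ (i + d / 2) + X ^ j) - Bd d (X ^ i - X ^ j) = d) ∧
      (i < j → Bd d (X ^ (i + d / 2) + X ^ j) - Bd d (X ^ i - X ^ j) = 0)) ∧
    ((j < i + d / 2 → Bd d (X ^ (i + d / 2) - X ^ j) - Bd d (X ^ i + X ^ j) = d) ∧
      (i + d / 2 < j → Bd d (X ^ (i + d / 2) - X ^ j) - Bd d (X ^ i + X ^ j) = 0)) := by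
  have hde : d = 2 * (d / 2) := by omega
  exact ⟨Bd_cohook_add_differences hde (by omega) i j,
    Bd_cohook_sub_differences hde (by omega) i j⟩

/-- Let `d ≥ 2` be even and `e = d/2`, and let `i, j ≥ 0` be integers; when `j > i`,
suppose additionally that `e` does not divide `j − i`. Then
`B_d(q^{i+e} + q^j) − B_d(q^i − q^j)` equals `d` if `i > j` and `0` if `i < j`; and
`B_d(q^{i+e} − q^j) − B_d(q^i + q^j)` equals `d` if `i − j > −e` and `0` if `i − j < −e`. -/
theorem Bd_cohook_differences (d i j : ℕ) (hd : 2 ≤ d) (heven : d % 2 = 0)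
    (hndvd : i < j → ¬ (d / 2 ∣ (j - i))) :
    ((j < i → Bd d (X ^ (i + d / 2) + X ^ j) - Bd d (X ^ i - X ^ j) = d) ∧
      (i < j → Bd d (X ^ (i + d / 2) + X ^ j) - Bd d (X ^ i - X ^ j) = 0)) ∧
    ((j < i + d / 2 → Bd d (X ^ (i + d / 2) - X ^ j) - Bd d (X ^ i + X ^ j) = d) ∧
      (i + d / 2 < j → Bd d (X ^ (i + d / 2) - X ^ j) - Bd d (X ^ i + X ^ j) = 0)) :=
  Bd_cohook_differences_general d i j hd heven
end

section
/- Let e > 1 be an odd integer and let X be a β-set of rank n which is an e-core, such that the set X' = {x ∈ X : x + e ∉ X} has exactly e elements. Let Y be the set of even elements of X' and Z the set of odd elements of X', with a = |Y| and b = |Z|, and suppose b > a ≥ 1; set c = b − a. Let x_α be the largest element of Y and let λ(x_α) = x_α − #{x ∈ X : x < x_α}. Then n − λ(x_α) + #{x ∈ X : x is odd and 0 < x − x_α < e} ≥ c. -/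
/-- The rank of a β-set `S` of size `s`: `(Σ_{x∈S} x) − s(s−1)/2`. -/
def brank (S : Finset ℕ) : ℕ := (∑ x ∈ S, x) - S.card * (S.card - 1) / 2

/-- A β-set is an `e`-core if `x − e ∈ S` for every `x ∈ S` with `x ≥ e`. -/
def IsCore (e : ℕ) (S : Finset ℕ) : Prop := ∀ x ∈ S, e ≤ x → x - e ∈ S

/-!
Write the top bead of the runner of `xa + u` on the `e`-abacus of the core as
`t u = xa + u - e * D u` (`0 ≤ u < e`, so `t 0 = xa`). Since `xa` is even and `e` odd, `t u` has
the parity of `u + D u`, so `b - a + 1` is the sum of the signs `±1` of `u + D u` over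
`0 < u < e`; and `u + D u` is odd whenever `D u ≤ 0`, because then `t u > xa` is a top larger
than the largest even top. The rank minus `λ(xa)` counts the pairs (gap `g`, bead `x ≠ xa`) with
`g < x`: up to two such pairs join runner `0` to runner `u` once `|D u - 1| ≥ 2`, and one joins
the runners `u < v` whose tops are more than `e` apart. The odd beads in `(xa, xa + e)` are the
`xa + u` with `D u ≤ 0` even. What remains is an inequality between integer sequences, proved
two runners at a time.
-/

open Finset

namespace BetaSet

def gapsBelow (S : Finset ℕ) (x : ℕ) : ℕ := #{y ∈ range x | y ∉ S}

theorem card_filter_lt_add_gapsBelow (S : Finset ℕ) (x : ℕ) :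
    #{y ∈ S | y < x} + gapsBelow S x = x := by
  have : {y ∈ S | y < x} = {y ∈ range x | y ∈ S} := by ext; simp [and_comm]
  rw [gapsBelow, this, card_filter_add_card_filter_not, card_range]

theorem two_mul_sum_card_filter_lt (S : Finset ℕ) :
    2 * ∑ x ∈ S, #{y ∈ S | y < x} = #S * (#S - 1) := by
  induction S using Finset.induction_on_max with
  | empty => simp
  | insert a s ha ih =>
    have has : a ∉ s := fun h => (ha a h).false
    have htop : {y ∈ insert a s | y < a} = s := by
      rw [filter_insert, if_neg (lt_irrefl a), filter_true_of_mem ha]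
    have hrest (x) (hx : x ∈ s) : {y ∈ insert a s | y < x} = {y ∈ s | y < x} := by
      rw [filter_insert, if_neg (not_lt.2 (ha x hx).le)]
    rw [sum_insert has, htop, sum_congr rfl fun x hx => by rw [hrest x hx],
      card_insert_of_notMem has, mul_add, ih]
    cases #s <;> simp; ring

theorem brank_eq_sum_gapsBelow (S : Finset ℕ) : brank S = ∑ x ∈ S, gapsBelow S x := by
  have hsum : ∑ x ∈ S, x = ∑ x ∈ S, #{y ∈ S | y < x} + ∑ x ∈ S, gapsBelow S x := by
    rw [← sum_add_distrib]
    exact sum_congr rfl fun x _ => (card_filter_lt_add_gapsBelow S x).symm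
  have := two_mul_sum_card_filter_lt S
  unfold brank
  omega

def gapPairs (S T : Finset ℕ) : Finset (ℕ × ℕ) :=
  T.biUnion fun x => {y ∈ range x | y ∉ S} ×ˢ {x}

theorem mem_gapPairs {S T : Finset ℕ} {z : ℕ × ℕ} :
    z ∈ gapPairs S T ↔ z.2 ∈ T ∧ z.1 < z.2 ∧ z.1 ∉ S := by
  obtain ⟨g, x⟩ := z
  simp only [gapPairs, mem_biUnion, mem_product, mem_filter, mem_range, mem_singleton]
  constructor
  · rintro ⟨x, hx, ⟨hg, hgS⟩, rfl⟩
    exact ⟨hx, hg, hgS⟩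
  · rintro ⟨hx, hg, hgS⟩
    exact ⟨x, hx, ⟨hg, hgS⟩, rfl⟩

theorem card_gapPairs (S T : Finset ℕ) : #(gapPairs S T) = ∑ x ∈ T, gapsBelow S x := by
  rw [gapPairs, card_biUnion]
  · simp [gapsBelow]
  · intro x _ y _ hxy
    simp only [Function.onFun, disjoint_left, mem_product, mem_singleton]
    rintro z ⟨-, rfl⟩ ⟨-, h⟩
    exact hxy h

theorem brank_eq_card_gapPairs_erase_add {S : Finset ℕ} {x : ℕ} (hx : x ∈ S) :
    brank S = #(gapPairs S (S.erase x)) + (x - #{y ∈ S | y < x}) := by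
  rw [brank_eq_sum_gapsBelow, ← sum_erase_add S _ hx, card_gapPairs]
  have := card_filter_lt_add_gapsBelow S x
  omega

def runnerGapPairs (e : ℕ) (S : Finset ℕ) (x₀ : ℕ) (c : Sym2 ℕ) : Finset (ℕ × ℕ) :=
  {z ∈ gapPairs S (S.erase x₀) | s(z.1 % e, z.2 % e) = c}

end BetaSet

theorem Nat.ModEq.eq_of_add_left {n a u v : ℕ} (h : a + u ≡ a + v [MOD n]) (hu : u < n)
    (hv : v < n) : u = v := by
  have := Nat.ModEq.add_left_cancel' a h
  rwa [Nat.ModEq, Nat.mod_eq_of_lt hu, Nat.mod_eq_of_lt hv] at this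

namespace IsCore

variable {e : ℕ} {S : Finset ℕ}

theorem sub_mul_mem (hS : IsCore e S) {x : ℕ} (hx : x ∈ S) :
    ∀ j, e * j ≤ x → x - e * j ∈ S
  | 0, _ => by simpa
  | j + 1, h => by
    have := hS _ (hS.sub_mul_mem hx j (le_trans (Nat.mul_le_mul_left e j.le_succ) h))
      (by rw [mul_add_one] at h; omega)
    rwa [Nat.sub_sub, ← mul_add_one] at this

theorem mem_of_modEq_of_le (hS : IsCore e S) {x y : ℕ} (hx : x ∈ S) (hyx : y ≡ x [MOD e])
    (hle : y ≤ x) : y ∈ S := by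
  obtain ⟨j, hj⟩ := (Nat.modEq_iff_dvd' hle).mp hyx
  have := hS.sub_mul_mem hx j (by omega)
  rwa [← hj, Nat.sub_sub_self hle] at this

theorem le_of_modEq (hS : IsCore e S) {x y : ℕ} (hy : y ∈ S) (hx : x + e ∉ S)
    (hyx : y ≡ x [MOD e]) : y ≤ x := by
  by_contra! hlt
  have hdvd := (Nat.modEq_iff_dvd' hlt.le).mp hyx.symm
  have hle : x + e ≤ y := by have := Nat.le_of_dvd (by omega) hdvd; omega
  exact hx (hS.mem_of_modEq_of_le hy ((Nat.add_modEq_right).trans hyx.symm) hle)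

theorem add_mul_notMem (hS : IsCore e S) {x k : ℕ} (hx : x + e ∉ S) (hk : 1 ≤ k) :
    x + k * e ∉ S := fun h =>
  hx (hS.mem_of_modEq_of_le h (by simp [Nat.ModEq, Nat.add_mul_mod_self_right])
    (by nlinarith))

theorem mem_iff_le (hS : IsCore e S) {x y : ℕ} (hy : y ∈ S) (hy' : y + e ∉ S)
    (hxy : x ≡ y [MOD e]) : x ∈ S ↔ x ≤ y :=
  ⟨fun hx => hS.le_of_modEq hx hy' hxy, hS.mem_of_modEq_of_le hy hxy⟩

theorem eq_of_modEq (hS : IsCore e S) {x y : ℕ} (hx : x ∈ S) (hx' : x + e ∉ S) (hy : y ∈ S)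
    (hy' : y + e ∉ S) (hxy : x ≡ y [MOD e]) : x = y :=
  le_antisymm (hS.le_of_modEq hx hy' hxy) (hS.le_of_modEq hy hx' hxy.symm)

theorem exists_top (hS : IsCore e S) (he : 0 < e) (hX' : #{x ∈ S | x + e ∉ S} = e) (y : ℕ) :
    ∃ x ∈ S, x + e ∉ S ∧ x ≡ y [MOD e] := by
  have himage : {x ∈ S | x + e ∉ S}.image (· % e) = range e := by
    refine eq_of_subset_of_card_le (fun r hr => ?_) ?_
    · obtain ⟨x, -, rfl⟩ := mem_image.mp hr
      exact mem_range.mpr (Nat.mod_lt x he)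
    · rw [card_range, card_image_of_injOn, hX']
      intro x hx x' hx' hxx'
      simp only [coe_filter, Set.mem_ofPred_eq] at hx hx'
      exact hS.eq_of_modEq hx.1 hx.2 hx'.1 hx'.2 hxx'
  obtain ⟨x, hx, hxy⟩ := mem_image.mp (himage ▸ mem_range.mpr (Nat.mod_lt y he))
  exact ⟨x, (mem_filter.mp hx).1, (mem_filter.mp hx).2, hxy⟩

theorem mem_runnerGapPairs (hS : IsCore e S) {x₀ y x k : ℕ} (hy : y + e ∉ S) (hx : x ∈ S)
    (hx₀ : x ≠ x₀) (hk : 1 ≤ k) (hlt : y + k * e < x) :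
    (y + k * e, x) ∈ BetaSet.runnerGapPairs e S x₀ s(y % e, x % e) := by
  simp [BetaSet.runnerGapPairs, BetaSet.mem_gapPairs, hS.add_mul_notMem hy hk, hx, hx₀, hlt]

end IsCore

theorem Finset.ite_le_card_filter {α : Type*} {s : Finset α} {P : α → Prop} [DecidablePred P]
    {x y : α} (hx : x ∈ s) (hy : y ∈ s) : (if P x ∨ P y then 1 else 0) ≤ #{z ∈ s | P z} := by
  split_ifs with h
  · rcases h with h | h
    · exact card_pos.2 ⟨x, mem_filter.2 ⟨hx, h⟩⟩
    · exact card_pos.2 ⟨y, mem_filter.2 ⟨hy, h⟩⟩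
  · exact Nat.zero_le _

namespace RunnerSeq

def paritySign (z : ℤ) : ℤ := if z % 2 = 1 then 1 else -1

/-- The pairs (gap, bead) between the runners of `xa` and of `xa + u` exhibited when `D u = d`:
`(xa + k * e, t u)` for `k ∈ {1, 2}` with `d ≤ -k`, and `(t u + k * e, xa - e)` for `k ∈ {1, 2}`
with `k + 2 ≤ d`. -/
def witnessCount (d : ℤ) : ℤ :=
  if d = -1 ∨ d = 3 then 1 else if -1 < d ∧ d < 3 then 0 else 2

def windowIndicator (d : ℤ) : ℤ := if d ≤ 0 ∧ d % 2 = 0 then 1 else 0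

def excess (u : ℕ) (d : ℤ) : ℤ := witnessCount d + windowIndicator d - paritySign (u + d)

/-- For `0 < u < v < e`, `Separated (D u) (D v)` says that the tops `t u` and `t v` are more than
`e` apart. -/
def Separated (a b : ℤ) : Prop := 1 ≤ a - b ∨ a - b ≤ -2

instance : DecidableRel Separated := fun _ _ => inferInstanceAs (Decidable (_ ∨ _))

def separatedPairs (m : ℕ) (d : ℕ → ℤ) : Finset (ℕ × ℕ) :=
  {p ∈ Ico 1 m ×ˢ Ico 1 m | p.1 < p.2 ∧ Separated (d p.1) (d p.2)}

theorem card_odd_sub_card_even_eq_sum (T : Finset ℕ) :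
    (#{x ∈ T | x % 2 = 1} : ℤ) - #{x ∈ T | x % 2 = 0} = ∑ x ∈ T, paritySign x := by
  have hodd : {x ∈ T | x % 2 = 1} = {x ∈ T | ((x : ℕ) : ℤ) % 2 = 1} :=
    filter_congr fun x _ => by omega
  have heven : {x ∈ T | x % 2 = 0} = {x ∈ T | ¬((x : ℕ) : ℤ) % 2 = 1} :=
    filter_congr fun x _ => by omega
  simp [paritySign, sum_ite, hodd, heven]
  ring

theorem excess_ge_of_odd {p : ℕ} {d : ℤ} (hp : p % 2 = 1)
    (hd : d ≤ 0 → (p + d) % 2 = 1) :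
    (if d = 2 then -1 else if d = 0 then 0 else 1) ≤ excess p d := by
  unfold excess witnessCount windowIndicator paritySign
  revert hd
  split_ifs <;> omega

theorem excess_ge_of_even {p : ℕ} {d : ℤ} (hp : p % 2 = 1)
    (hd : d ≤ 0 → (p + 1 + d) % 2 = 1) :
    (if d = 1 then -1 else if d = -1 ∨ d = 3 then 0 else 1) ≤ excess (p + 1) d := by
  unfold excess witnessCount windowIndicator paritySign
  push_cast
  revert hd
  split_ifs <;> omega

theorem excess_pair_self_nonneg {p : ℕ} {c : ℤ} (hp : p % 2 = 1)
    (hc : c ≤ 0 → (p + c) % 2 = 1) (hc' : c ≤ 0 → (p + 1 + c) % 2 = 1) :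
    0 ≤ excess p c + excess (p + 1) c := by
  have := excess_ge_of_odd hp hc
  have := excess_ge_of_even hp hc'
  split_ifs at * <;> omega

theorem neg_one_le_excess_pair {p : ℕ} {a b : ℤ} (hp : p % 2 = 1)
    (ha : a ≤ 0 → (p + a) % 2 = 1) (hb : b ≤ 0 → (p + 1 + b) % 2 = 1) :
    -1 ≤ excess p a + excess (p + 1) b + if Separated a b then 1 else 0 := by
  have := excess_ge_of_odd hp ha
  have := excess_ge_of_even hp hb
  unfold Separated
  split_ifs at * <;> omega

/-- Only `(a, b) = (2, 1), (0, 1), (2, 3)` fall short of `0` without further help, and then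
`min a b` is the only value separated from neither `a` nor `b`. -/
theorem excess_pair_nonneg_of_ne {p : ℕ} {a b c c' : ℤ} (hp : p % 2 = 1)
    (ha : a ≤ 0 → (p + a) % 2 = 1) (hb : b ≤ 0 → (p + 1 + b) % 2 = 1) (hcc' : c ≠ c') :
    0 ≤ excess p a + excess (p + 1) b + (if Separated a b then 1 else 0) +
      if (Separated c a ∨ Separated c b) ∨ Separated c' a ∨ Separated c' b then 1 else 0 := by
  have := excess_ge_of_odd hp ha
  have := excess_ge_of_even hp hb
  unfold Separated
  split_ifs at * <;> omega

theorem separatedPairs_succ (m : ℕ) (d : ℕ → ℤ) :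
    separatedPairs (m + 1) d =
      separatedPairs m d ∪ {x ∈ Ico 1 m | Separated (d x) (d m)} ×ˢ {m} := by
  ext ⟨x, y⟩
  simp only [separatedPairs, mem_union, mem_filter, mem_product, mem_Ico, mem_singleton]
  constructor
  · rintro ⟨⟨⟨hx1, -⟩, hy1, hy2⟩, hxy, hs⟩
    rcases Nat.lt_succ_iff_lt_or_eq.mp hy2 with hy | rfl
    · exact Or.inl ⟨⟨⟨hx1, by omega⟩, hy1, hy⟩, hxy, hs⟩
    · exact Or.inr ⟨⟨⟨hx1, hxy⟩, hs⟩, rfl⟩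
  · rintro (⟨⟨⟨hx1, -⟩, hy1, hy2⟩, hxy, hs⟩ | ⟨⟨⟨hx1, hx2⟩, hs⟩, rfl⟩)
    · exact ⟨⟨⟨hx1, by omega⟩, hy1, by omega⟩, hxy, hs⟩
    · exact ⟨⟨⟨hx1, by omega⟩, by omega, by omega⟩, hx2, hs⟩

theorem card_separatedPairs_succ (m : ℕ) (d : ℕ → ℤ) :
    #(separatedPairs (m + 1) d) =
      #(separatedPairs m d) + #{x ∈ Ico 1 m | Separated (d x) (d m)} := by
  rw [separatedPairs_succ, card_union_of_disjoint, card_product, card_singleton, mul_one]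
  rw [disjoint_left]
  rintro ⟨x, y⟩ h1 h2
  simp only [separatedPairs, mem_filter, mem_product, mem_Ico, mem_singleton] at h1 h2
  omega

theorem card_separatedPairs_add_two {p : ℕ} (hp : 1 ≤ p) (d : ℕ → ℤ) :
    #(separatedPairs p d) + (if Separated (d p) (d (p + 1)) then 1 else 0) +
        #{x ∈ Ico 1 p | Separated (d x) (d p) ∨ Separated (d x) (d (p + 1))} ≤
      #(separatedPairs (p + 2) d) := by
  rw [card_separatedPairs_succ, card_separatedPairs_succ, ← insert_Ico_right_eq_Ico_add_one hp,
    filter_insert, filter_or]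
  have := card_union_le {x ∈ Ico 1 p | Separated (d x) (d p)}
    {x ∈ Ico 1 p | Separated (d x) (d (p + 1))}
  split_ifs
  · rw [card_insert_of_notMem fun h => right_notMem_Ico (mem_filter.1 h).1]
    omega
  · omega

/-- A deficit of `1` is only incurred while all earlier values agree. -/
theorem neg_one_le_sum_excess_add_card (k : ℕ) (d : ℕ → ℤ)
    (hd : ∀ u ∈ Ico 1 (2 * k + 1), d u ≤ 0 → (u + d u) % 2 = 1) :
    -1 ≤ ∑ u ∈ Ico 1 (2 * k + 1), excess u (d u) + #(separatedPairs (2 * k + 1) d) ∧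
      ((∀ x ∈ Ico 1 (2 * k + 1), ∀ y ∈ Ico 1 (2 * k + 1), d x = d y) →
        0 ≤ ∑ u ∈ Ico 1 (2 * k + 1), excess u (d u) + #(separatedPairs (2 * k + 1) d)) := by
  induction k with
  | zero => simp [separatedPairs]
  | succ k ih =>
    set p := 2 * k + 1
    have hp : p % 2 = 1 := by omega
    obtain ⟨ih, ih_const⟩ := ih fun u hu => hd u (by simp only [mem_Ico] at hu ⊢; omega)
    have hdp := hd p (by simp only [mem_Ico]; omega)
    have hdq : d (p + 1) ≤ 0 → (p + 1 + d (p + 1)) % 2 = 1 := by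
      simpa using hd (p + 1) (by simp only [mem_Ico]; omega)
    have hQ := card_separatedPairs_add_two (show 1 ≤ p by omega) d
    rw [show 2 * (k + 1) + 1 = p + 2 by omega, sum_Ico_succ_top (by omega),
      sum_Ico_succ_top (by omega)]
    constructor
    · by_cases hconst : ∀ x ∈ Ico 1 p, ∀ y ∈ Ico 1 p, d x = d y
      · have := ih_const hconst
        have := neg_one_le_excess_pair hp hdp hdq
        zify at hQ
        omega
      · push Not at hconst
        obtain ⟨x, hx, y, hy, hxy⟩ := hconst
        have hpair := excess_pair_nonneg_of_ne hp hdp hdq hxy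
        have hhit := ite_le_card_filter (P := fun x => Separated (d x) (d p) ∨
          Separated (d x) (d (p + 1))) hx hy
        zify at hQ hhit
        omega
    · intro hconst
      have := ih_const fun x hx y hy =>
        hconst x (by simp only [mem_Ico] at hx ⊢; omega) y (by simp only [mem_Ico] at hy ⊢; omega)
      have hpq := hconst p (by simp only [mem_Ico]; omega) (p + 1) (by simp only [mem_Ico]; omega)
      have := excess_pair_self_nonneg hp hdp (hpq ▸ hdq)
      rw [← hpq]
      zify at hQ
      omega

theorem sum_paritySign_le (k : ℕ) (d : ℕ → ℤ)
    (hd : ∀ u ∈ Ico 1 (2 * k + 1), d u ≤ 0 → (u + d u) % 2 = 1) :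
    ∑ u ∈ Ico 1 (2 * k + 1), paritySign (u + d u) ≤
      1 + ∑ u ∈ Ico 1 (2 * k + 1), (witnessCount (d u) + windowIndicator (d u)) +
        #(separatedPairs (2 * k + 1) d) := by
  have := (neg_one_le_sum_excess_add_card k d hd).1
  simp only [excess, sum_sub_distrib] at this
  linarith

end RunnerSeq

open BetaSet RunnerSeq

structure RunnerTops (e : ℕ) (S : Finset ℕ) (xa : ℕ) (t : ℕ → ℕ) (D : ℕ → ℤ) : Prop where
  mem : ∀ u, t u ∈ S
  add_notMem : ∀ u, t u + e ∉ S
  cast_eq : ∀ u, (t u : ℤ) = xa + u - e * D u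

theorem IsCore.exists_runnerTops {e : ℕ} {S : Finset ℕ} (hS : IsCore e S) (he : 0 < e)
    (hX' : #{x ∈ S | x + e ∉ S} = e) (xa : ℕ) : ∃ t D, RunnerTops e S xa t D := by
  choose t ht using fun u => hS.exists_top he hX' (xa + u)
  choose D hD using fun u => Nat.modEq_iff_dvd.mp (ht u).2.2
  refine ⟨t, D, fun u => (ht u).1, fun u => (ht u).2.1, fun u => ?_⟩
  push_cast at hD
  linarith [hD u]

namespace RunnerTops

variable {e : ℕ} {S : Finset ℕ} {xa : ℕ} {t : ℕ → ℕ} {D : ℕ → ℤ}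

theorem modEq (h : RunnerTops e S xa t D) (u : ℕ) : t u ≡ xa + u [MOD e] :=
  Nat.modEq_iff_dvd.mpr ⟨D u, by push_cast; linarith [h.cast_eq u]⟩

theorem injOn (h : RunnerTops e S xa t D) : Set.InjOn t (range e) := fun u hu v hv huv =>
  ((h.modEq u).symm.trans (huv ▸ h.modEq v)).eq_of_add_left (mem_range.1 hu) (mem_range.1 hv)

theorem image_range (h : RunnerTops e S xa t D) (hX' : #{x ∈ S | x + e ∉ S} = e) :
    (range e).image t = {x ∈ S | x + e ∉ S} := by
  refine eq_of_subset_of_card_le (fun x hx => ?_) ?_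
  · obtain ⟨u, -, rfl⟩ := mem_image.1 hx
    exact mem_filter.2 ⟨h.mem u, h.add_notMem u⟩
  · rw [hX', card_image_of_injOn h.injOn, card_range]

theorem apply_zero (hS : IsCore e S) (h : RunnerTops e S xa t D) (hxa : xa ∈ S)
    (hxa' : xa + e ∉ S) : t 0 = xa :=
  hS.eq_of_modEq (h.mem 0) (h.add_notMem 0) hxa hxa' (h.modEq 0)

theorem add_mem_iff (hS : IsCore e S) (h : RunnerTops e S xa t D) (he : 0 < e) (u : ℕ) :
    xa + u ∈ S ↔ D u ≤ 0 := by
  rw [hS.mem_iff_le (h.mem u) (h.add_notMem u) (h.modEq u).symm, ← Nat.cast_le (α := ℤ),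
    h.cast_eq u]
  push_cast
  constructor <;> intro <;> nlinarith

theorem emod_two_eq (h : RunnerTops e S xa t D) (he : Odd e) (hxa : xa % 2 = 0) (u : ℕ) :
    (t u : ℤ) % 2 = (u + D u) % 2 := by
  obtain ⟨m, rfl⟩ := he
  have : (t u : ℤ) = xa + u - D u - 2 * (m * D u) := by rw [h.cast_eq]; push_cast; ring
  omega

theorem card_odd_sub_card_even (hS : IsCore e S) (h : RunnerTops e S xa t D)
    (hX' : #{x ∈ S | x + e ∉ S} = e) (he : Odd e) (hxa : xa ∈ S) (hxa' : xa + e ∉ S)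
    (hxa2 : xa % 2 = 0) :
    (#{x ∈ {x ∈ S | x + e ∉ S} | x % 2 = 1} : ℤ) - #{x ∈ {x ∈ S | x + e ∉ S} | x % 2 = 0} =
      ∑ u ∈ Ico 1 e, paritySign (u + D u) - 1 := by
  rw [card_odd_sub_card_even_eq_sum, ← h.image_range hX', sum_image h.injOn,
    sum_range_eq_add_Ico _ he.pos, h.apply_zero hS hxa hxa']
  have hsign : paritySign xa = -1 := by simp only [paritySign]; omega
  have hsum : ∑ u ∈ Ico 1 e, paritySign (t u) = ∑ u ∈ Ico 1 e, paritySign (u + D u) :=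
    sum_congr rfl fun u _ => by simp only [paritySign, h.emod_two_eq he hxa2 u]
  rw [hsign, hsum]
  ring

theorem card_window (hS : IsCore e S) (h : RunnerTops e S xa t D) (he : 0 < e)
    (hxa2 : xa % 2 = 0) (hpar : ∀ u ∈ Ico 1 e, D u ≤ 0 → (u + D u) % 2 = 1) :
    (#{x ∈ S | x % 2 = 1 ∧ xa < x ∧ x < xa + e} : ℤ) =
      ∑ u ∈ Ico 1 e, windowIndicator (D u) := by
  simp only [windowIndicator, sum_boole]
  congr 1
  refine card_nbij' (· - xa) (xa + ·) (fun x hx => ?_) (fun u hu => ?_) (fun x hx => ?_)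
    fun u _ => by simp
  · simp only [coe_filter, Set.mem_ofPred_eq, mem_Ico] at hx ⊢
    obtain ⟨hxS, hx2, hxa_lt, hlt⟩ := hx
    have hD := (h.add_mem_iff hS he (x - xa)).1 (by rwa [Nat.add_sub_cancel' hxa_lt.le])
    have := hpar (x - xa) (mem_Ico.2 ⟨by omega, by omega⟩) hD
    omega
  · simp only [coe_filter, Set.mem_ofPred_eq, mem_Ico] at hu ⊢
    obtain ⟨⟨hu1, hue⟩, hD, hD2⟩ := hu
    have := hpar u (mem_Ico.2 ⟨hu1, hue⟩) hD
    exact ⟨(h.add_mem_iff hS he u).2 hD, by omega, by omega, by omega⟩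
  · simp only [coe_filter, Set.mem_ofPred_eq] at hx
    show xa + (x - xa) = x
    omega

theorem apply_ne (h : RunnerTops e S xa t D) {u : ℕ} (hu : u ∈ Ico 1 e) : t u ≠ xa := by
  obtain ⟨hu1, hue⟩ := mem_Ico.1 hu
  intro htu
  have : xa + 0 ≡ xa + u [MOD e] := htu ▸ h.modEq u
  have := this.eq_of_add_left (by omega) hue
  omega

theorem mem_runnerGapPairs_of_le_neg (hS : IsCore e S) (h : RunnerTops e S xa t D)
    (hxa' : xa + e ∉ S) {u k : ℕ} (hu : u ∈ Ico 1 e) (hk : 1 ≤ k) (hD : D u ≤ -k) :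
    (xa + k * e, t u) ∈ runnerGapPairs e S xa s(xa % e, (xa + u) % e) := by
  have hlt : xa + k * e < t u := by
    have := mul_le_mul_of_nonneg_left hD (Nat.cast_nonneg (α := ℤ) e)
    have := (mem_Ico.1 hu).1
    zify
    linarith [h.cast_eq u]
  rw [← show t u % e = (xa + u) % e from h.modEq u]
  exact hS.mem_runnerGapPairs hxa' (h.mem u) (h.apply_ne hu) hk hlt

theorem mem_runnerGapPairs_of_add_two_le (hS : IsCore e S) (h : RunnerTops e S xa t D)
    (hxa : xa ∈ S) {u k : ℕ} (hu : u ∈ Ico 1 e) (hk : 1 ≤ k) (hD : k + 2 ≤ D u) :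
    (t u + k * e, xa - e) ∈ runnerGapPairs e S xa s(xa % e, (xa + u) % e) := by
  have hD' := mul_le_mul_of_nonneg_left hD (Nat.cast_nonneg (α := ℤ) e)
  have hue := (mem_Ico.1 hu).2
  have hexa : e ≤ xa := by
    zify
    nlinarith [h.cast_eq u, Nat.cast_nonneg (α := ℤ) (t u)]
  have hlt : t u + k * e < xa - e := by
    zify [hexa]
    linarith [h.cast_eq u]
  have hmod : (xa - e) % e = xa % e := by
    conv_rhs => rw [← Nat.sub_add_cancel hexa, Nat.add_mod_right]
  rw [Sym2.eq_swap, ← hmod, ← show t u % e = (xa + u) % e from h.modEq u]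
  exact hS.mem_runnerGapPairs (h.add_notMem u) (hS xa hxa hexa) (by omega) hk hlt

theorem witnessCount_le_card_runnerGapPairs (hS : IsCore e S) (h : RunnerTops e S xa t D)
    (hxa : xa ∈ S) (hxa' : xa + e ∉ S) {u : ℕ} (hu : u ∈ Ico 1 e) :
    witnessCount (D u) ≤ #(runnerGapPairs e S xa s(xa % e, (xa + u) % e)) := by
  have he : 0 < e := by have := mem_Ico.1 hu; omega
  have below := fun k => h.mem_runnerGapPairs_of_le_neg hS hxa' hu (k := k)
  have above := fun k => h.mem_runnerGapPairs_of_add_two_le hS hxa hu (k := k)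
  unfold witnessCount
  split_ifs with h1 h2
  · rcases h1 with h1 | h1
    · exact_mod_cast card_pos.2 ⟨_, below 1 le_rfl (by omega)⟩
    · exact_mod_cast card_pos.2 ⟨_, above 1 le_rfl (by omega)⟩
  · positivity
  · rcases (by omega : D u ≤ -2 ∨ 4 ≤ D u) with h3 | h3
    · exact_mod_cast one_lt_card.2
        ⟨_, below 1 le_rfl (by omega), _, below 2 (by norm_num) (by omega), by simp; omega⟩
    · exact_mod_cast one_lt_card.2
        ⟨_, above 1 le_rfl (by omega), _, above 2 (by norm_num) (by omega), by simp; omega⟩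

theorem one_le_card_runnerGapPairs (hS : IsCore e S) (h : RunnerTops e S xa t D)
    {q : ℕ × ℕ} (hq : q ∈ separatedPairs e D) :
    1 ≤ #(runnerGapPairs e S xa s((xa + q.1) % e, (xa + q.2) % e)) := by
  obtain ⟨u, v⟩ := q
  simp only [separatedPairs, mem_filter, mem_product, mem_Ico] at hq
  obtain ⟨⟨⟨hu1, hue⟩, hv1, hve⟩, huv, hsep⟩ := hq
  have hmu : t u % e = (xa + u) % e := h.modEq u
  have hmv : t v % e = (xa + v) % e := h.modEq v
  have htu := h.cast_eq u
  have htv := h.cast_eq v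
  rcases hsep with hsep | hsep
  · have := mul_le_mul_of_nonneg_left hsep (Nat.cast_nonneg (α := ℤ) e)
    have hlt : t u + 1 * e < t v := by zify; linarith
    rw [← hmu, ← hmv]
    exact card_pos.2 ⟨_, hS.mem_runnerGapPairs (h.add_notMem u) (h.mem v)
      (h.apply_ne (mem_Ico.2 ⟨hv1, hve⟩)) le_rfl hlt⟩
  · have := mul_le_mul_of_nonneg_left hsep (Nat.cast_nonneg (α := ℤ) e)
    have hlt : t v + 1 * e < t u := by zify; linarith
    rw [Sym2.eq_swap, ← hmu, ← hmv]
    exact card_pos.2 ⟨_, hS.mem_runnerGapPairs (h.add_notMem v) (h.mem u)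
      (h.apply_ne (mem_Ico.2 ⟨hu1, hue⟩)) le_rfl hlt⟩

/-- Different pairs of runners give disjoint fibres of `z ↦ s(z.1 % e, z.2 % e)`. -/
theorem sum_witnessCount_add_card_le (hS : IsCore e S) (h : RunnerTops e S xa t D)
    (hxa : xa ∈ S) (hxa' : xa + e ∉ S) :
    ∑ u ∈ Ico 1 e, witnessCount (D u) + #(separatedPairs e D) ≤
      #(gapPairs S (S.erase xa)) := by
  set r : ℕ → ℕ := fun u => (xa + u) % e
  have hr {u v : ℕ} (hu : u < e) (hv : v < e) (huv : r u = r v) : u = v :=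
    Nat.ModEq.eq_of_add_left huv hu hv
  have hinj₁ : Set.InjOn (fun u => s(r 0, r u)) (Ico 1 e) := by
    intro u hu v hv huv
    simp only [coe_Ico, Set.mem_Ico] at hu hv
    rcases Sym2.eq_iff.1 huv with ⟨-, h'⟩ | ⟨h', -⟩
    · exact hr hu.2 hv.2 h'
    · have := hr (by omega) hv.2 h'
      omega
  have hinj₂ : Set.InjOn (fun q : ℕ × ℕ => s(r q.1, r q.2)) (separatedPairs e D) := by
    rintro ⟨u, v⟩ hq ⟨u', v'⟩ hq' huv
    simp only [separatedPairs, coe_filter, mem_product, mem_Ico, Set.mem_ofPred_eq] at hq hq'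
    rcases Sym2.eq_iff.1 huv with ⟨h₁, h₂⟩ | ⟨h₁, h₂⟩
    · exact Prod.ext (hr (by omega) (by omega) h₁) (hr (by omega) (by omega) h₂)
    · have := hr (by omega) (by omega) h₁
      have := hr (by omega) (by omega) h₂
      omega
  have hdisj : Disjoint ((Ico 1 e).image fun u => s(r 0, r u))
      ((separatedPairs e D).image fun q => s(r q.1, r q.2)) := by
    simp only [disjoint_left, mem_image, not_exists, not_and]
    rintro _ ⟨u, hu, rfl⟩ ⟨u', v'⟩ hq huv
    simp only [separatedPairs, mem_filter, mem_product, mem_Ico] at hu hq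
    rcases Sym2.eq_iff.1 huv with ⟨h₁, -⟩ | ⟨-, h₁⟩
    · have := hr (by omega) (by omega) h₁
      omega
    · have := hr (by omega) (by omega) h₁
      omega
  have hfib : ∑ c ∈ (Ico 1 e).image (fun u => s(r 0, r u)) ∪
      (separatedPairs e D).image (fun q => s(r q.1, r q.2)), #(runnerGapPairs e S xa c) ≤
      #(gapPairs S (S.erase xa)) := by
    simp only [runnerGapPairs]
    rw [sum_card_fiberwise_eq_card_filter]
    exact card_filter_le _ _
  rw [sum_union hdisj, sum_image hinj₁, sum_image hinj₂] at hfib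
  have h₁ : ∑ u ∈ Ico 1 e, witnessCount (D u) ≤
      ∑ u ∈ Ico 1 e, (#(runnerGapPairs e S xa s(r 0, r u)) : ℤ) :=
    sum_le_sum fun u hu => h.witnessCount_le_card_runnerGapPairs hS hxa hxa' hu
  have h₂ : #(separatedPairs e D) ≤
      ∑ q ∈ separatedPairs e D, #(runnerGapPairs e S xa s(r q.1, r q.2)) := by
    rw [card_eq_sum_ones]
    exact sum_le_sum fun q hq => h.one_le_card_runnerGapPairs hS hq
  zify at hfib h₂
  linarith

theorem emod_two_eq_one_of_nonpos (h : RunnerTops e S xa t D) (he : Odd e)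
    (hxa2 : xa % 2 = 0) (hmax : ∀ y ∈ S, y + e ∉ S → y % 2 = 0 → y ≤ xa) {u : ℕ} (hu : 0 < u)
    (hD : D u ≤ 0) :
    (u + D u) % 2 = 1 := by
  have hlt : xa < t u := by
    have := mul_nonpos_of_nonneg_of_nonpos (Nat.cast_nonneg (α := ℤ) e) hD
    zify
    linarith [h.cast_eq u]
  have := h.emod_two_eq he hxa2 u
  have := mt (hmax (t u) (h.mem u) (h.add_notMem u)) (not_le.2 hlt)
  omega

end RunnerTops

theorem unitary_perversity_lower_bound_general (e : ℕ) (hodd : Odd e)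
    (S : Finset ℕ) (hS : IsCore e S)
    (hX' : (S.filter fun x => x + e ∉ S).card = e)
    (a b : ℕ)
    (ha : a = ((S.filter fun x => x + e ∉ S).filter fun x => x % 2 = 0).card)
    (hb : b = ((S.filter fun x => x + e ∉ S).filter fun x => x % 2 = 1).card)
    (hY : ((S.filter fun x => x + e ∉ S).filter fun x => x % 2 = 0).Nonempty)
    (xa : ℕ)
    (hxa : xa = ((S.filter fun x => x + e ∉ S).filter fun x => x % 2 = 0).max' hY) :
    (b : ℤ) - (a : ℤ) ≤
      (brank S : ℤ) - ((xa : ℤ) - ((S.filter (· < xa)).card : ℤ))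
        + ((S.filter fun x => x % 2 = 1 ∧ xa < x ∧ x < xa + e).card : ℤ) := by
  have hmem := max'_mem _ hY
  rw [← hxa, mem_filter, mem_filter] at hmem
  obtain ⟨⟨hxaS, hxa'⟩, hxa2⟩ := hmem
  have hmax (y : ℕ) (hy : y ∈ S) (hy' : y + e ∉ S) (hy2 : y % 2 = 0) : y ≤ xa :=
    hxa ▸ le_max' _ y (by simp [hy, hy', hy2])
  obtain ⟨t, D, h⟩ := hS.exists_runnerTops hodd.pos hX' xa
  have hD : ∀ u ∈ Ico 1 e, D u ≤ 0 → (u + D u) % 2 = 1 := fun u hu =>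
    h.emod_two_eq_one_of_nonpos hodd hxa2 hmax (mem_Ico.1 hu).1
  have hsign := h.card_odd_sub_card_even hS hX' hodd hxaS hxa' hxa2
  have hwindow := h.card_window hS hodd.pos hxa2 hD
  have hwitness := h.sum_witnessCount_add_card_le hS hxaS hxa'
  have hrank := brank_eq_card_gapPairs_erase_add hxaS
  obtain ⟨k, hk⟩ := hodd
  have hcomb := sum_paritySign_le k D (hk ▸ hD)
  rw [← hk, sum_add_distrib] at hcomb
  subst ha hb
  have : #{y ∈ S | y < xa} ≤ xa := by
    have := card_filter_lt_add_gapsBelow S xa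
    omega
  rw [hrank]
  push_cast [this]
  linarith

/-- Let `e > 1` be odd, `S` an `e`-core β-set of rank `n` with
`X' = {x ∈ S : x + e ∉ S}` of size exactly `e`; let `Y`, `Z` be the even and odd
elements of `X'`, with `a = |Y|`, `b = |Z|`, `b > a ≥ 1` and `c = b − a`. If `x_α` is the
largest element of `Y` and `λ(x_α) = x_α − #{x ∈ S : x < x_α}`, then
`n − λ(x_α) + #{x ∈ S : x odd, 0 < x − x_α < e} ≥ c`. -/
theorem unitary_perversity_lower_bound (e : ℕ) (he : 1 < e) (hodd : Odd e)
    (S : Finset ℕ) (hS : IsCore e S)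
    (hX' : (S.filter fun x => x + e ∉ S).card = e)
    (a b : ℕ)
    (ha : a = ((S.filter fun x => x + e ∉ S).filter fun x => x % 2 = 0).card)
    (hb : b = ((S.filter fun x => x + e ∉ S).filter fun x => x % 2 = 1).card)
    (ha1 : 1 ≤ a) (hab : a < b)
    (hY : ((S.filter fun x => x + e ∉ S).filter fun x => x % 2 = 0).Nonempty)
    (xa : ℕ)
    (hxa : xa = ((S.filter fun x => x + e ∉ S).filter fun x => x % 2 = 0).max' hY) :
    (b : ℤ) - (a : ℤ) ≤
      (brank S : ℤ) - ((xa : ℤ) - ((S.filter (· < xa)).card : ℤ))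
        + ((S.filter fun x => x % 2 = 1 ∧ xa < x ∧ x < xa + e).card : ℤ) :=
  unitary_perversity_lower_bound_general e hodd S hS hX' a b ha hb hY xa hxa
end

section
/- Let d ≥ 3 be an odd integer (so e = d). Let Λ = {X, Y} be a symbol of rank n which is an e-core. For a symbol Λ' = {X', Y'} of rank n', define NumS(Λ') = (∏_{i=1}^{n'}(q^{2i} − 1))·(∏_{x > x' in X'}(q^x − q^{x'}))·(∏_{y > y' in Y'}(q^y − q^{y'}))·(∏_{x∈X', y∈Y'}(q^x + q^y)) and DenS(Λ') = (∏_{x∈X'} ∏_{j=1}^{x}(q^{2j} − 1))·(∏_{y∈Y'} ∏_{j=1}^{y}(q^{2j} − 1)), polynomials in ℚ[q]. For x₀ ∈ X with x₀ + d ∉ X, set Λ_{x₀} = {(X\{x₀})∪{x₀+d}, Y} (a symbol of rank n + d) and D(x₀) = B_d(NumS(Λ_{x₀})) − B_d(DenS(Λ_{x₀})) − B_d(NumS(Λ)) + B_d(DenS(Λ)). Then D(x₀) = d·( 4(n − x₀) + 2·#{x ∈ X : x < x₀} + 2·#{y ∈ Y : x₀ − y > −d/2} + #{x ∈ X : x >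 x₀ and x + d ∉ X} ); consequently, if x₀ < x₁ are two elements of X with x₀ + d ∉ X and x₁ + d ∉ X, then D(x₀) > D(x₁). -/
open Polynomial

/-- The rank of a symbol `{A, B}`: `Σ_A + Σ_B − ⌊(|A|+|B|−1)²/4⌋`. -/
def srank (A B : Finset ℕ) : ℕ :=
  ((∑ x ∈ A, x) + ∑ y ∈ B, y) - (A.card + B.card - 1) ^ 2 / 4

/-- A symbol `{A, B}` is an `e`-core if both entries are `e`-core β-sets. -/
def IsSymbolCore (e : ℕ) (A B : Finset ℕ) : Prop :=
  (∀ x ∈ A, e ≤ x → x - e ∈ A) ∧ (∀ y ∈ B, e ≤ y → y - e ∈ B)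

/-- `NumS(Λ') = (∏_{i=1}^{n'}(q^{2i} − 1))·(∏_{x > x' in A}(q^x − q^{x'}))·
(∏_{y > y' in B}(q^y − q^{y'}))·(∏_{x∈A, y∈B}(q^x + q^y))`. -/
noncomputable def NumS (A B : Finset ℕ) : Polynomial ℚ :=
  (∏ i ∈ Finset.Icc 1 (srank A B), (X ^ (2 * i) - 1)) *
  (∏ x ∈ A, ∏ x' ∈ A.filter (· < x), (X ^ x - X ^ x')) *
  (∏ y ∈ B, ∏ y' ∈ B.filter (· < y), (X ^ y - X ^ y')) *
  (∏ x ∈ A, ∏ y ∈ B, (X ^ x + X ^ y))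

/-- `DenS(Λ') = (∏_{x∈A} ∏_{j=1}^{x}(q^{2j} − 1))·(∏_{y∈B} ∏_{j=1}^{y}(q^{2j} − 1))`. -/
noncomputable def DenS (A B : Finset ℕ) : Polynomial ℚ :=
  (∏ x ∈ A, ∏ j ∈ Finset.Icc 1 x, (X ^ (2 * j) - 1)) *
  (∏ y ∈ B, ∏ j ∈ Finset.Icc 1 y, (X ^ (2 * j) - 1))

/-- `D(x₀)` for adding a `d`-hook at `x₀ ∈ A` to the symbol `{A, B}`. -/
noncomputable def DHook (d : ℕ) (A B : Finset ℕ) (x0 : ℕ) : ℚ :=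
  Bd d (NumS (insert (x0 + d) (A.erase x0)) B)
    - Bd d (DenS (insert (x0 + d) (A.erase x0)) B)
    - Bd d (NumS A B) + Bd d (DenS A B)

namespace DHookAux

lemma cyclotomic_coeff_zero_ne (r : ℕ) : (cyclotomic r ℚ).coeff 0 ≠ 0 := by
  rcases Nat.lt_or_ge r 2 with h | h
  · interval_cases r <;> simp [cyclotomic_zero, cyclotomic_one]
  · rw [cyclotomic_coeff_zero ℚ h]; norm_num

lemma not_X_dvd_cyclotomic (r : ℕ) : ¬ (X : Polynomial ℚ) ∣ cyclotomic r ℚ := by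
  rw [X_dvd_iff]; exact cyclotomic_coeff_zero_ne r

lemma cyclotomic_prime {r : ℕ} (hr : 1 ≤ r) : Prime (cyclotomic r ℚ) :=
  (cyclotomic.irreducible_rat hr).prime

lemma not_cyclotomic_dvd_X {s : ℕ} (hs : 1 ≤ s) : ¬ cyclotomic s ℚ ∣ (X : Polynomial ℚ) := by
  intro h
  have hass : Associated (cyclotomic s ℚ) (X : Polynomial ℚ) :=
    (cyclotomic_prime hs).irreducible.associated_of_dvd irreducible_X h
  have := eq_of_monic_of_associated (cyclotomic.monic s ℚ) monic_X hass
  exact cyclotomic_coeff_zero_ne s (by rw [this]; simp)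

lemma not_cyclotomic_dvd_cyclotomic {s r : ℕ} (hs : 1 ≤ s) (hne : r ≠ s) :
    ¬ cyclotomic s ℚ ∣ cyclotomic r ℚ := by
  intro h
  rcases Nat.eq_zero_or_pos r with rfl | hr
  · rw [cyclotomic_zero] at h
    exact (cyclotomic_prime hs).not_unit (isUnit_of_dvd_one h)
  · have hass : Associated (cyclotomic s ℚ) (cyclotomic r ℚ) :=
      (cyclotomic_prime hs).irreducible.associated_of_dvd
        (cyclotomic.irreducible_rat hr) h
    have := eq_of_monic_of_associated (cyclotomic.monic s ℚ) (cyclotomic.monic r ℚ) hass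
    exact hne (cyclotomic_injective (R := ℚ) this.symm)

lemma not_cyclotomic_dvd_C {s : ℕ} (hs : 1 ≤ s) (c : ℚˣ) :
    ¬ cyclotomic s ℚ ∣ C (c : ℚ) := by
  intro h
  exact (cyclotomic_prime hs).not_unit
    (isUnit_of_dvd_unit h (isUnit_C.2 c.isUnit))

lemma not_X_dvd_C (c : ℚˣ) : ¬ (X : Polynomial ℚ) ∣ C (c : ℚ) := by
  rw [X_dvd_iff]; simpa using c.ne_zero

end DHookAux

namespace DHookAux

/-- A formal representation of a polynomial `c • X^a • ∏ Φ_r ^ (m r)`. -/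
structure CycRep where
  c : ℚˣ
  a : ℕ
  m : ℕ →₀ ℕ

namespace CycRep

noncomputable def toPoly (R : CycRep) : Polynomial ℚ :=
  C (R.c : ℚ) * X ^ R.a * R.m.prod fun r k => cyclotomic r ℚ ^ k

instance : One CycRep := ⟨⟨1, 0, 0⟩⟩
noncomputable instance : Mul CycRep := ⟨fun R S => ⟨R.c * S.c, R.a + S.a, R.m + S.m⟩⟩

@[simp] lemma one_c : (1 : CycRep).c = 1 := rfl
@[simp] lemma one_a : (1 : CycRep).a = 0 := rfl
@[simp] lemma one_m : (1 : CycRep).m = 0 := rfl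
@[simp] lemma mul_c (R S : CycRep) : (R * S).c = R.c * S.c := rfl
@[simp] lemma mul_a (R S : CycRep) : (R * S).a = R.a + S.a := rfl
@[simp] lemma mul_m (R S : CycRep) : (R * S).m = R.m + S.m := rfl

lemma ext' : ∀ {R S : CycRep}, R.c = S.c → R.a = S.a → R.m = S.m → R = S
  | ⟨_, _, _⟩, ⟨_, _, _⟩, rfl, rfl, rfl => rfl

noncomputable instance : CommMonoid CycRep where
  mul_assoc R S T := ext' (mul_assoc _ _ _) (add_assoc _ _ _) (add_assoc _ _ _)
  one_mul R := ext' (one_mul _) (zero_add _) (zero_add _)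
  mul_one R := ext' (mul_one _) (add_zero _) (add_zero _)
  mul_comm R S := ext' (mul_comm _ _) (add_comm _ _) (add_comm _ _)

@[simp] lemma toPoly_one : (1 : CycRep).toPoly = 1 := by
  simp [toPoly]

lemma toPoly_mul (R S : CycRep) : (R * S).toPoly = R.toPoly * S.toPoly := by
  unfold toPoly
  simp only [mul_c, mul_a, mul_m, Units.val_mul, map_mul, pow_add]
  rw [Finsupp.prod_add_index (by intro r _; simp) (by intro r _ k l; rw [pow_add])]
  ring

/-- `toPoly` as a monoid hom. -/
noncomputable def toPolyHom : CycRep →* Polynomial ℚ where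
  toFun := toPoly
  map_one' := toPoly_one
  map_mul' := toPoly_mul

lemma toPoly_ne_zero (R : CycRep) : R.toPoly ≠ 0 := by
  unfold toPoly
  refine mul_ne_zero (mul_ne_zero ?_ ?_) ?_
  · simpa using R.c.ne_zero
  · exact pow_ne_zero _ X_ne_zero
  · exact Finsupp.prod_ne_zero_iff.2 fun r _ => pow_ne_zero _ (cyclotomic_ne_zero r ℚ)

end CycRep

end DHookAux

namespace DHookAux
namespace CycRep

lemma emultiplicity_X_toPoly (R : CycRep) :
    emultiplicity (X : Polynomial ℚ) R.toPoly = R.a := by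
  unfold toPoly Finsupp.prod
  rw [emultiplicity_mul prime_X, emultiplicity_mul prime_X,
    Finset.emultiplicity_prod prime_X]
  rw [emultiplicity_eq_zero.2 (not_X_dvd_C R.c)]
  rw [emultiplicity_pow_self_of_prime prime_X]
  have : ∀ r ∈ R.m.support,
      emultiplicity (X : Polynomial ℚ) (cyclotomic r ℚ ^ R.m r) = 0 := by
    intro r _
    rw [emultiplicity_pow prime_X, emultiplicity_eq_zero.2 (not_X_dvd_cyclotomic r)]
    simp
  rw [Finset.sum_congr rfl this]
  simp

lemma emultiplicity_cyclotomic_toPoly (R : CycRep) {s : ℕ} (hs : 1 ≤ s) :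
    emultiplicity (cyclotomic s ℚ) R.toPoly = R.m s := by
  unfold toPoly Finsupp.prod
  rw [emultiplicity_mul (cyclotomic_prime hs), emultiplicity_mul (cyclotomic_prime hs),
    Finset.emultiplicity_prod (cyclotomic_prime hs)]
  rw [emultiplicity_eq_zero.2 (not_cyclotomic_dvd_C hs R.c)]
  rw [emultiplicity_pow (cyclotomic_prime hs),
    emultiplicity_eq_zero.2 (not_cyclotomic_dvd_X hs)]
  have : ∀ r ∈ R.m.support,
      emultiplicity (cyclotomic s ℚ) (cyclotomic r ℚ ^ R.m r)
        = if r = s then (R.m r : ℕ∞) else 0 := by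
    intro r _
    rcases eq_or_ne r s with rfl | hne
    · rw [emultiplicity_pow_self_of_prime (cyclotomic_prime hs)]; simp
    · rw [emultiplicity_pow (cyclotomic_prime hs),
        emultiplicity_eq_zero.2 (not_cyclotomic_dvd_cyclotomic hs hne)]
      simp [hne]
  rw [Finset.sum_congr rfl this, Finset.sum_ite_eq' R.m.support s (fun r => (R.m r : ℕ∞))]
  by_cases h : s ∈ R.m.support
  · simp [h]
  · simp only [h, if_false]
    rw [Finsupp.notMem_support_iff.1 h]
    simp

lemma multiplicity_X_toPoly (R : CycRep) : multiplicity (X : Polynomial ℚ) R.toPoly = R.a :=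
  multiplicity_eq_of_emultiplicity_eq_some (R.emultiplicity_X_toPoly)

lemma multiplicity_cyclotomic_toPoly (R : CycRep) {s : ℕ} (hs : 1 ≤ s) :
    multiplicity (cyclotomic s ℚ) R.toPoly = R.m s :=
  multiplicity_eq_of_emultiplicity_eq_some (R.emultiplicity_cyclotomic_toPoly hs)

/-- The degree of the represented polynomial. -/
def Deg (R : CycRep) : ℕ := R.a + R.m.sum fun r k => k * r.totient

lemma natDegree_toPoly (R : CycRep) : R.toPoly.natDegree = R.Deg := by
  unfold toPoly Deg Finsupp.sum
  rw [natDegree_mul (mul_ne_zero (by simpa using R.c.ne_zero) (pow_ne_zero _ X_ne_zero))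
      (Finsupp.prod_ne_zero_iff.2 fun r _ => pow_ne_zero _ (cyclotomic_ne_zero r ℚ)),
    natDegree_mul (by simpa using R.c.ne_zero) (pow_ne_zero _ X_ne_zero)]
  unfold Finsupp.prod
  rw [natDegree_prod _ _ (fun r _ => pow_ne_zero _ (cyclotomic_ne_zero r ℚ))]
  simp [natDegree_pow, natDegree_cyclotomic]

end CycRep
end DHookAux

namespace DHookAux
namespace CycRep

/-- The `B_d`-value of a representation. -/
noncomputable def Bval (d : ℕ) (R : CycRep) : ℚ :=
  2 * R.a + R.m.sum fun r k => (k : ℚ) * ((Nat.totient r : ℚ) + d * phiD d r)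

lemma Bval_one (d : ℕ) : Bval d 1 = 0 := by simp [Bval]

lemma Bval_mul (d : ℕ) (R S : CycRep) : Bval d (R * S) = Bval d R + Bval d S := by
  unfold Bval
  rw [mul_m, mul_a, Finsupp.sum_add_index (by intro r _; simp) (by intro r _ k l; push_cast; ring)]
  push_cast
  ring

/-- `Good R`: the support avoids `0` and is bounded by twice the degree. -/
def Good (R : CycRep) : Prop := R.m 0 = 0 ∧ ∀ r ∈ R.m.support, r ≤ 2 * R.Deg

lemma Good.one : Good 1 := ⟨rfl, by simp [Deg]⟩

lemma Deg_mul (R S : CycRep) : (R * S).Deg = R.Deg + S.Deg := by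
  unfold Deg
  rw [mul_m, mul_a, Finsupp.sum_add_index (by intro r _; simp) (by intro r _ k l; ring)]
  ring

lemma Good.mul {R S : CycRep} (hR : Good R) (hS : Good S) : Good (R * S) := by
  constructor
  · simp [hR.1, hS.1]
  · intro r hr
    rw [mul_m] at hr
    have hr' := Finsupp.support_add hr
    rw [Deg_mul]
    rcases Finset.mem_union.1 hr' with h' | h'
    · have := hR.2 r h'; omega
    · have := hS.2 r h'; omega

lemma Good.prod {ι : Type*} {s : Finset ι} {F : ι → CycRep} (h : ∀ i ∈ s, Good (F i)) :
    Good (∏ i ∈ s, F i) := by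
  classical
  induction s using Finset.cons_induction with
  | empty => simpa using Good.one
  | cons a s ha ih =>
    rw [Finset.prod_cons]
    exact (h a (Finset.mem_cons_self a s)).mul (ih fun i hi => h i (Finset.mem_cons_of_mem hi))

lemma Bval_prod (d : ℕ) {ι : Type*} (s : Finset ι) (F : ι → CycRep) :
    Bval d (∏ i ∈ s, F i) = ∑ i ∈ s, Bval d (F i) := by
  classical
  induction s using Finset.cons_induction with
  | empty => simpa using Bval_one d
  | cons a s ha ih => rw [Finset.prod_cons, Finset.sum_cons, Bval_mul, ih]

lemma Bd_toPoly (d : ℕ) {R : CycRep} (h : Good R) : Bd d R.toPoly = Bval d R := by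
  unfold Bd Bval
  rw [R.multiplicity_X_toPoly]
  congr 1
  rw [Finsupp.sum]
  have hsub : R.m.support ⊆ Finset.Icc 1 (2 * R.toPoly.natDegree ^ 2 + 1) := by
    intro r hr
    have h0 : r ≠ 0 := fun h0 => by
      rw [h0] at hr; exact (Finsupp.mem_support_iff.1 hr) h.1
    have hb := h.2 r hr
    rw [Finset.mem_Icc, R.natDegree_toPoly]
    constructor
    · omega
    · nlinarith [sq_nonneg R.Deg]
  rw [show (∑ r ∈ Finset.Icc 1 (2 * R.toPoly.natDegree ^ 2 + 1),
      (multiplicity (cyclotomic r ℚ) R.toPoly : ℚ) * ((Nat.totient r : ℚ) + d * phiD d r))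
      = ∑ r ∈ Finset.Icc 1 (2 * R.toPoly.natDegree ^ 2 + 1),
      ((R.m r : ℚ) * ((Nat.totient r : ℚ) + d * phiD d r)) from
    Finset.sum_congr rfl fun r hr => by
      rw [R.multiplicity_cyclotomic_toPoly (Finset.mem_Icc.1 hr).1]]
  rw [Finset.sum_subset hsub]
  intro r _ hr
  rw [Finsupp.notMem_support_iff.1 hr]
  simp

end CycRep
end DHookAux

namespace DHookAux

lemma sum_card_phiD {d m : ℕ} (hd : 3 ≤ d) (hm : 1 ≤ m) :
    ∑ r ∈ m.divisors.erase 1,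
      ((Finset.Icc 1 (r / d)).filter fun j => Nat.gcd j r = 1).card = m / d := by
  classical
  rw [← Finset.card_sigma]
  rw [show m / d = (Finset.Icc 1 (m / d)).card by simp]
  refine Finset.card_bij' (fun (p : (_ : ℕ) × ℕ) (_ : p ∈ (m.divisors.erase 1).sigma
      fun r => (Finset.Icc 1 (r / d)).filter fun j => Nat.gcd j r = 1) => p.2 * (m / p.1))
    (fun (k : ℕ) (_ : k ∈ Finset.Icc 1 (m / d)) =>
      (⟨m / Nat.gcd k m, k / Nat.gcd k m⟩ : (_ : ℕ) × ℕ)) ?_ ?_ ?_ ?_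
  · -- forward membership
    rintro ⟨r, j⟩ hp
    rw [Finset.mem_sigma] at hp
    obtain ⟨hr, hj⟩ := hp
    dsimp only at hr hj ⊢
    have hrd : r ∣ m := (Nat.mem_divisors.1 (Finset.mem_of_mem_erase hr)).1
    have hrm : r * (m / r) = m := Nat.mul_div_cancel' hrd
    have hr0 : 0 < r := Nat.pos_of_mem_divisors (Finset.mem_of_mem_erase hr)
    have hmr0 : 0 < m / r := Nat.div_pos (Nat.le_of_dvd hm hrd) hr0
    rw [Finset.mem_filter, Finset.mem_Icc] at hj
    obtain ⟨⟨hj1, hj2⟩, hjcop⟩ := hj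
    rw [Finset.mem_Icc]
    constructor
    · exact Nat.one_le_iff_ne_zero.2 (Nat.mul_ne_zero (by omega) (by omega))
    · rw [Nat.le_div_iff_mul_le (show 0 < d by omega)]
      have hjd : j * d ≤ r := (Nat.le_div_iff_mul_le (show 0 < d by omega)).1 hj2
      calc j * (m / r) * d = j * d * (m / r) := by ring
        _ ≤ r * (m / r) := Nat.mul_le_mul_right _ hjd
        _ = m := hrm
  · -- backward membership
    intro k hk
    rw [Finset.mem_Icc] at hk
    obtain ⟨hk1, hk2⟩ := hk
    have hg : 0 < Nat.gcd k m := Nat.gcd_pos_of_pos_left m (by omega)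
    have hgm : Nat.gcd k m ∣ m := Nat.gcd_dvd_right k m
    have hgk : Nat.gcd k m ∣ k := Nat.gcd_dvd_left k m
    have hrm : m / Nat.gcd k m ∣ m := Nat.div_dvd_of_dvd hgm
    rw [Finset.mem_sigma]
    dsimp only
    constructor
    · rw [Finset.mem_erase, Nat.mem_divisors]
      refine ⟨?_, hrm, by omega⟩
      intro h1
      have hgmm : Nat.gcd k m = m := by
        have h2 := Nat.div_mul_cancel hgm
        rw [h1, one_mul] at h2
        exact h2
      have hmk : m ∣ k := hgmm ▸ hgk
      have h3 := Nat.le_of_dvd (by omega) hmk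
      have h4 := Nat.div_lt_self (show 0 < m by omega) (show 1 < d by omega)
      omega
    · rw [Finset.mem_filter, Finset.mem_Icc]
      refine ⟨⟨?_, ?_⟩, Nat.coprime_div_gcd_div_gcd hg⟩
      · exact Nat.div_pos (Nat.le_of_dvd (by omega) hgk) hg
      · rw [Nat.le_div_iff_mul_le (show 0 < d by omega), Nat.le_div_iff_mul_le hg]
        have hkd : k * d ≤ m := (Nat.le_div_iff_mul_le (show 0 < d by omega)).1 hk2
        calc k / Nat.gcd k m * d * Nat.gcd k m
            = k / Nat.gcd k m * Nat.gcd k m * d := by ring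
          _ = k * d := by rw [Nat.div_mul_cancel hgk]
          _ ≤ m := hkd
  · -- left inverse
    rintro ⟨r, j⟩ hp
    rw [Finset.mem_sigma] at hp
    obtain ⟨hr, hj⟩ := hp
    dsimp only at hr hj ⊢
    have hrd : r ∣ m := (Nat.mem_divisors.1 (Finset.mem_of_mem_erase hr)).1
    have hr0 : 0 < r := Nat.pos_of_mem_divisors (Finset.mem_of_mem_erase hr)
    have hmr0 : 0 < m / r := Nat.div_pos (Nat.le_of_dvd hm hrd) hr0
    rw [Finset.mem_filter] at hj
    obtain ⟨t, ht⟩ := hrd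
    have htt : m / r = t := by rw [ht, Nat.mul_div_cancel_left _ hr0]
    have hgcd : Nat.gcd (j * (m / r)) m = m / r := by
      rw [htt, ht, Nat.gcd_mul_right, hj.2, one_mul]
    have h1 : m / Nat.gcd (j * (m / r)) m = r := by
      rw [hgcd, htt, ht, Nat.mul_div_cancel _ (htt ▸ hmr0)]
    have h2 : j * (m / r) / Nat.gcd (j * (m / r)) m = j := by
      rw [hgcd, Nat.mul_div_cancel _ hmr0]
    exact Sigma.ext h1 (heq_of_eq_of_heq h2 (h1 ▸ HEq.rfl))
  · -- right inverse
    intro k hk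
    rw [Finset.mem_Icc] at hk
    have hg : 0 < Nat.gcd k m := Nat.gcd_pos_of_pos_left m (by omega)
    have hgm : Nat.gcd k m ∣ m := Nat.gcd_dvd_right k m
    have hgk : Nat.gcd k m ∣ k := Nat.gcd_dvd_left k m
    dsimp only
    rw [Nat.div_div_self hgm (by omega), Nat.div_mul_cancel hgk]

lemma sum_phiD {d m : ℕ} (hd : 3 ≤ d) (hm : 1 ≤ m) :
    ∑ r ∈ m.divisors, phiD d r = ((m / d : ℕ) : ℚ) + 1 / 2 := by
  classical
  have h1 : (1 : ℕ) ∈ m.divisors := Nat.one_mem_divisors.2 (by omega)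
  rw [← Finset.add_sum_erase _ _ h1]
  have : ∀ r ∈ m.divisors.erase 1, phiD d r
      = (((Finset.Icc 1 (r / d)).filter fun j => Nat.gcd j r = 1).card : ℚ) := by
    intro r hr
    rw [phiD, if_neg (Finset.ne_of_mem_erase hr)]
  rw [Finset.sum_congr rfl this, ← Nat.cast_sum, sum_card_phiD hd hm, phiD, if_pos rfl]
  ring

end DHookAux

namespace DHookAux

noncomputable def indicatorOn (s : Finset ℕ) : ℕ →₀ ℕ :=
  Finsupp.indicator s fun _ _ => 1

lemma indicatorOn_apply_mem {s : Finset ℕ} {r : ℕ} (h : r ∈ s) : indicatorOn s r = 1 :=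
  Finsupp.indicator_of_mem h _

lemma indicatorOn_apply_notMem {s : Finset ℕ} {r : ℕ} (h : r ∉ s) : indicatorOn s r = 0 :=
  Finsupp.indicator_of_notMem h _

lemma support_indicatorOn (s : Finset ℕ) : (indicatorOn s).support = s := by
  ext r
  rw [Finsupp.mem_support_iff]
  constructor
  · intro h
    by_contra hr
    exact h (Finsupp.indicator_of_notMem hr _)
  · intro h
    rw [indicatorOn_apply_mem h]
    exact one_ne_zero

lemma sum_indicatorOn {M : Type*} [AddCommMonoid M] (s : Finset ℕ) (f : ℕ → ℕ → M)
    (hf : ∀ r, f r 0 = 0) : (indicatorOn s).sum f = ∑ r ∈ s, f r 1 := by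
  rw [Finsupp.sum, support_indicatorOn]
  exact Finset.sum_congr rfl fun r hr => by rw [indicatorOn_apply_mem hr]

namespace CycRep

noncomputable def repXpow (b : ℕ) : CycRep := ⟨1, b, 0⟩
noncomputable def repTwo : CycRep := ⟨Units.mk0 (2 : ℚ) (by norm_num), 0, 0⟩
noncomputable def repSub (M : ℕ) : CycRep := ⟨1, 0, indicatorOn M.divisors⟩
noncomputable def repAdd2 (M : ℕ) : CycRep :=
  ⟨1, 0, indicatorOn ((2 * M).divisors \ M.divisors)⟩

lemma toPoly_repXpow (b : ℕ) : (repXpow b).toPoly = Polynomial.X ^ b := by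
  simp [toPoly, repXpow]

lemma toPoly_repTwo : repTwo.toPoly = Polynomial.C (2 : ℚ) := by
  simp [toPoly, repTwo]

lemma prod_indicator_cyclotomic (s : Finset ℕ) :
    ((indicatorOn s).prod fun r k => Polynomial.cyclotomic r ℚ ^ k)
      = ∏ r ∈ s, Polynomial.cyclotomic r ℚ := by
  rw [Finsupp.prod, support_indicatorOn]
  exact Finset.prod_congr rfl fun r hr => by rw [indicatorOn_apply_mem hr, pow_one]

lemma toPoly_repSub {M : ℕ} (hM : 1 ≤ M) :
    (repSub M).toPoly = Polynomial.X ^ M - 1 := by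
  rw [toPoly, repSub, prod_indicator_cyclotomic,
    Polynomial.prod_cyclotomic_eq_X_pow_sub_one (by omega) ℚ]
  simp

lemma X_pow_sub_one_ne_zero {M : ℕ} (hM : 1 ≤ M) :
    (Polynomial.X ^ M - 1 : Polynomial ℚ) ≠ 0 := by
  have := Polynomial.monic_X_pow_sub_C (1 : ℚ) (by omega : M ≠ 0)
  simpa [Polynomial.C_1] using this.ne_zero

lemma toPoly_repAdd2 {M : ℕ} (hM : 1 ≤ M) :
    (repAdd2 M).toPoly = Polynomial.X ^ M + 1 := by
  have hsub : M.divisors ⊆ (2 * M).divisors :=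
    Nat.divisors_subset_of_dvd (by omega) ⟨2, by ring⟩
  apply mul_left_cancel₀ (X_pow_sub_one_ne_zero hM)
  have key : (Polynomial.X ^ M - 1 : Polynomial ℚ) * (repAdd2 M).toPoly
      = Polynomial.X ^ (2 * M) - 1 := by
    rw [toPoly, repAdd2, prod_indicator_cyclotomic]
    rw [← Polynomial.prod_cyclotomic_eq_X_pow_sub_one (by omega : 0 < M) ℚ]
    rw [← Polynomial.prod_cyclotomic_eq_X_pow_sub_one (by omega : 0 < 2 * M) ℚ]
    rw [← Finset.prod_sdiff hsub]
    simp only [Units.val_one, Polynomial.C_1, one_mul, pow_zero]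
    ring
  rw [key]
  rw [show 2 * M = M + M by ring, pow_add]
  ring

end CycRep

end DHookAux

namespace DHookAux

/-- `B_d(X^M - 1) = M + d⌊M/d⌋ + d/2`. -/
noncomputable def FF (d M : ℕ) : ℚ := M + d * ((M / d : ℕ) : ℚ) + d / 2

/-- `B_d(X^M + 1) = M + d(⌊2M/d⌋ - ⌊M/d⌋)`. -/
noncomputable def GG (d M : ℕ) : ℚ := M + d * ((2 * M / d : ℕ) : ℚ) - d * ((M / d : ℕ) : ℚ)

variable {d : ℕ}

lemma sum_w_divisors (hd : 3 ≤ d) {M : ℕ} (hM : 1 ≤ M) :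
    (∑ r ∈ M.divisors, ((r.totient : ℚ) + d * phiD d r)) = FF d M := by
  rw [Finset.sum_add_distrib, ← Finset.mul_sum, sum_phiD hd hM, ← Nat.cast_sum,
    Nat.sum_totient, FF]
  ring

namespace CycRep

lemma Bval_repXpow (b : ℕ) : Bval d (repXpow b) = 2 * b := by
  simp [Bval, repXpow]

lemma Bval_repTwo : Bval d repTwo = 0 := by
  simp [Bval, repTwo]

lemma Bval_repSub (hd : 3 ≤ d) {M : ℕ} (hM : 1 ≤ M) : Bval d (repSub M) = FF d M := by
  rw [Bval, repSub]
  rw [sum_indicatorOn _ _ (fun r => by simp)]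
  simp only [Nat.cast_one, one_mul, Nat.cast_zero]
  rw [sum_w_divisors hd hM]
  norm_num

lemma Bval_repAdd2 (hd : 3 ≤ d) {M : ℕ} (hM : 1 ≤ M) :
    Bval d (repAdd2 M) = GG d M := by
  have hsub : M.divisors ⊆ (2 * M).divisors :=
    Nat.divisors_subset_of_dvd (by omega) ⟨2, by ring⟩
  rw [Bval, repAdd2]
  rw [sum_indicatorOn _ _ (fun r => by simp)]
  simp only [Nat.cast_one, one_mul, Nat.cast_zero]
  rw [Finset.sum_sdiff_eq_sub hsub, sum_w_divisors hd hM, sum_w_divisors hd (by omega)]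
  rw [FF, FF, GG]
  push_cast
  ring

lemma Deg_repXpow (b : ℕ) : (repXpow b).Deg = b := by simp [Deg, repXpow]

lemma Deg_repTwo : repTwo.Deg = 0 := by simp [Deg, repTwo]

lemma Deg_repSub {M : ℕ} : (repSub M).Deg = M := by
  rw [Deg, repSub]
  rw [sum_indicatorOn _ _ (fun r => by simp)]
  simp [Nat.sum_totient]

@[simp] lemma repSub_m (M : ℕ) : (repSub M).m = indicatorOn M.divisors := rfl
@[simp] lemma repAdd2_m (M : ℕ) :
    (repAdd2 M).m = indicatorOn ((2 * M).divisors \ M.divisors) := rfl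

lemma Deg_repAdd2 {M : ℕ} (hM : 1 ≤ M) : (repAdd2 M).Deg = M := by
  have hsub : M.divisors ⊆ (2 * M).divisors :=
    Nat.divisors_subset_of_dvd (by omega) ⟨2, by ring⟩
  rw [Deg, repAdd2]
  rw [sum_indicatorOn _ _ (fun r => by simp)]
  simp only [one_mul, zero_add]
  have h : ∑ r ∈ (2 * M).divisors \ M.divisors, r.totient + ∑ r ∈ M.divisors, r.totient
      = ∑ r ∈ (2 * M).divisors, r.totient := Finset.sum_sdiff hsub
  rw [Nat.sum_totient, Nat.sum_totient] at h
  omega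

lemma zero_notMem_divisors (M : ℕ) : 0 ∉ M.divisors := by
  intro h
  exact absurd (Nat.pos_of_mem_divisors h) (by omega)

lemma Good_repXpow (b : ℕ) : Good (repXpow b) := ⟨rfl, by simp [repXpow]⟩

lemma Good_repTwo : Good repTwo := ⟨rfl, by simp [repTwo]⟩

lemma Good_repSub {M : ℕ} : Good (repSub M) := by
  constructor
  · rw [repSub_m]
    exact indicatorOn_apply_notMem (zero_notMem_divisors M)
  · intro r hr
    rw [repSub_m, support_indicatorOn] at hr
    have := Nat.le_of_dvd (Nat.pos_of_ne_zero (Nat.mem_divisors.1 hr).2)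
      (Nat.mem_divisors.1 hr).1
    rw [Deg_repSub]
    omega

lemma Good_repAdd2 {M : ℕ} (hM : 1 ≤ M) : Good (repAdd2 M) := by
  constructor
  · rw [repAdd2_m]
    refine indicatorOn_apply_notMem ?_
    intro h
    exact zero_notMem_divisors (2 * M) (Finset.mem_sdiff.1 h).1
  · intro r hr
    rw [repAdd2_m, support_indicatorOn] at hr
    have hr2 := (Finset.mem_sdiff.1 hr).1
    have := Nat.le_of_dvd (by omega) (Nat.mem_divisors.1 hr2).1
    rw [Deg_repAdd2 hM]
    omega

/-- Representation of `X^x - X^x'` for `x' < x`. -/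
noncomputable def repPair (x x' : ℕ) : CycRep := repXpow x' * repSub (x - x')

/-- Representation of `X^x + X^y`. -/
noncomputable def repMix (x y : ℕ) : CycRep :=
  if x = y then repTwo * repXpow x
  else repXpow (min x y) * repAdd2 (max x y - min x y)

lemma toPoly_repPair {x x' : ℕ} (h : x' < x) :
    (repPair x x').toPoly = Polynomial.X ^ x - Polynomial.X ^ x' := by
  rw [repPair, toPoly_mul, toPoly_repXpow, toPoly_repSub (by omega)]
  rw [mul_sub, mul_one, ← pow_add]
  congr 2
  omega

lemma toPoly_repMix (x y : ℕ) :
    (repMix x y).toPoly = Polynomial.X ^ x + Polynomial.X ^ y := by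
  rw [repMix]
  split_ifs with hxy
  · subst hxy
    rw [toPoly_mul, toPoly_repTwo, toPoly_repXpow,
      show (2 : ℚ) = 1 + 1 by norm_num, map_add, map_one, add_mul, one_mul]
  · have hlt : min x y < max x y := by
      rcases Nat.lt_or_ge x y with h | h
      · rw [min_eq_left (le_of_lt h), max_eq_right (le_of_lt h)]; omega
      · rw [min_eq_right h, max_eq_left h]; omega
    rw [toPoly_mul, toPoly_repXpow, toPoly_repAdd2 (by omega)]
    rw [mul_add, mul_one, ← pow_add]
    have : min x y + (max x y - min x y) = max x y := by omega
    rw [this]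
    rcases Nat.lt_or_ge x y with h | h
    · rw [min_eq_left (le_of_lt h), max_eq_right (le_of_lt h), add_comm]
    · rw [min_eq_right h, max_eq_left h]

lemma Good_repPair (x x' : ℕ) : Good (repPair x x') :=
  (Good_repXpow x').mul Good_repSub

lemma Good_repMix (x y : ℕ) : Good (repMix x y) := by
  rw [repMix]
  split_ifs with hxy
  · exact Good_repTwo.mul (Good_repXpow x)
  · refine (Good_repXpow _).mul (Good_repAdd2 ?_)
    rcases Nat.lt_or_ge x y with h | h
    · rw [min_eq_left (le_of_lt h), max_eq_right (le_of_lt h)]; omega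
    · have : y < x := by omega
      rw [min_eq_right h, max_eq_left h]; omega

lemma Bval_repPair (hd : 3 ≤ d) {x x' : ℕ} (h : x' < x) :
    Bval d (repPair x x') = 2 * x' + FF d (x - x') := by
  rw [repPair, Bval_mul, Bval_repXpow, Bval_repSub hd (by omega)]

/-- The `B_d`-value of the mixed factor `X^x + X^y`. -/
noncomputable def MM (d x y : ℕ) : ℚ :=
  if x = y then (2 * x : ℚ) else 2 * ((min x y : ℕ) : ℚ) + GG d (max x y - min x y)

lemma Bval_repMix (hd : 3 ≤ d) (x y : ℕ) : Bval d (repMix x y) = MM d x y := by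
  rw [repMix, MM]
  split_ifs with hxy
  · rw [Bval_mul, Bval_repTwo, Bval_repXpow]; ring
  · have hlt : min x y < max x y := by
      rcases Nat.lt_or_ge x y with h | h
      · rw [min_eq_left (le_of_lt h), max_eq_right (le_of_lt h)]; omega
      · have : y < x := by omega
        rw [min_eq_right h, max_eq_left h]; omega
    rw [Bval_mul, Bval_repXpow, Bval_repAdd2 hd (by omega)]

end CycRep
end DHookAux

namespace DHookAux
namespace CycRep

noncomputable def RepNum (A B : Finset ℕ) : CycRep :=
  (∏ i ∈ Finset.Icc 1 (srank A B), repSub (2 * i)) *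
  (∏ x ∈ A, ∏ x' ∈ A.filter (· < x), repPair x x') *
  (∏ y ∈ B, ∏ y' ∈ B.filter (· < y), repPair y y') *
  (∏ x ∈ A, ∏ y ∈ B, repMix x y)

noncomputable def RepDen (A B : Finset ℕ) : CycRep :=
  (∏ x ∈ A, ∏ j ∈ Finset.Icc 1 x, repSub (2 * j)) *
  (∏ y ∈ B, ∏ j ∈ Finset.Icc 1 y, repSub (2 * j))

lemma toPoly_prod {ι : Type*} (s : Finset ι) (F : ι → CycRep) :
    (∏ i ∈ s, F i).toPoly = ∏ i ∈ s, (F i).toPoly :=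
  map_prod toPolyHom F s

lemma toPoly_RepNum (A B : Finset ℕ) : (RepNum A B).toPoly = NumS A B := by
  rw [RepNum, NumS, toPoly_mul, toPoly_mul, toPoly_mul]
  congr 1
  · congr 1
    · congr 1
      · rw [toPoly_prod]
        refine Finset.prod_congr rfl fun i hi => ?_
        rw [toPoly_repSub (by have := (Finset.mem_Icc.1 hi).1; omega)]
      · rw [toPoly_prod]
        refine Finset.prod_congr rfl fun x _ => ?_
        rw [toPoly_prod]
        refine Finset.prod_congr rfl fun x' hx' => ?_
        exact toPoly_repPair (Finset.mem_filter.1 hx').2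
    · rw [toPoly_prod]
      refine Finset.prod_congr rfl fun y _ => ?_
      rw [toPoly_prod]
      refine Finset.prod_congr rfl fun y' hy' => ?_
      exact toPoly_repPair (Finset.mem_filter.1 hy').2
  · rw [toPoly_prod]
    refine Finset.prod_congr rfl fun x _ => ?_
    rw [toPoly_prod]
    exact Finset.prod_congr rfl fun y _ => toPoly_repMix x y

lemma toPoly_RepDen (A B : Finset ℕ) : (RepDen A B).toPoly = DenS A B := by
  rw [RepDen, DenS, toPoly_mul]
  congr 1 <;>
  · rw [toPoly_prod]
    refine Finset.prod_congr rfl fun x _ => ?_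
    rw [toPoly_prod]
    refine Finset.prod_congr rfl fun j hj => ?_
    rw [toPoly_repSub (by have := (Finset.mem_Icc.1 hj).1; omega)]

lemma Good_RepNum (A B : Finset ℕ) : Good (RepNum A B) := by
  refine (((Good.prod fun i _ => Good_repSub).mul
    (Good.prod fun x _ => Good.prod fun x' _ => Good_repPair x x')).mul
    (Good.prod fun y _ => Good.prod fun y' _ => Good_repPair y y')).mul
    (Good.prod fun x _ => Good.prod fun y _ => Good_repMix x y)

lemma Good_RepDen (A B : Finset ℕ) : Good (RepDen A B) :=
  (Good.prod fun x _ => Good.prod fun j _ => Good_repSub).mul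
    (Good.prod fun y _ => Good.prod fun j _ => Good_repSub)

variable {d : ℕ}

lemma Bd_NumS (hd : 3 ≤ d) (A B : Finset ℕ) :
    Bd d (NumS A B)
      = (∑ i ∈ Finset.Icc 1 (srank A B), FF d (2 * i))
        + (∑ x ∈ A, ∑ x' ∈ A.filter (· < x), (2 * (x' : ℚ) + FF d (x - x')))
        + (∑ y ∈ B, ∑ y' ∈ B.filter (· < y), (2 * (y' : ℚ) + FF d (y - y')))
        + (∑ x ∈ A, ∑ y ∈ B, CycRep.MM d x y) := by
  rw [← toPoly_RepNum, Bd_toPoly d (Good_RepNum A B), RepNum,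
    Bval_mul, Bval_mul, Bval_mul, Bval_prod, Bval_prod, Bval_prod, Bval_prod]
  congr 1
  · congr 1
    · congr 1
      · exact Finset.sum_congr rfl fun i hi => Bval_repSub hd (by have := (Finset.mem_Icc.1 hi).1; omega)
      · refine Finset.sum_congr rfl fun x _ => ?_
        rw [Bval_prod]
        exact Finset.sum_congr rfl fun x' hx' =>
          Bval_repPair hd (Finset.mem_filter.1 hx').2
    · refine Finset.sum_congr rfl fun y _ => ?_
      rw [Bval_prod]
      exact Finset.sum_congr rfl fun y' hy' =>
        Bval_repPair hd (Finset.mem_filter.1 hy').2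
  · refine Finset.sum_congr rfl fun x _ => ?_
    rw [Bval_prod]
    exact Finset.sum_congr rfl fun y _ => Bval_repMix hd x y

lemma Bd_DenS (hd : 3 ≤ d) (A B : Finset ℕ) :
    Bd d (DenS A B)
      = (∑ x ∈ A, ∑ j ∈ Finset.Icc 1 x, FF d (2 * j))
        + (∑ y ∈ B, ∑ j ∈ Finset.Icc 1 y, FF d (2 * j)) := by
  rw [← toPoly_RepDen, Bd_toPoly d (Good_RepDen A B), RepDen, Bval_mul,
    Bval_prod, Bval_prod]
  congr 1 <;>
  · refine Finset.sum_congr rfl fun x _ => ?_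
    rw [Bval_prod]
    exact Finset.sum_congr rfl fun j hj => Bval_repSub hd (by have := (Finset.mem_Icc.1 hj).1; omega)

end CycRep
end DHookAux

namespace DHookAux

variable {d : ℕ}

lemma FF_add (hd : 1 ≤ d) (M : ℕ) : FF d (M + d) = FF d M + 2 * d := by
  rw [FF, FF, Nat.add_div_right M (by omega)]
  push_cast
  ring

lemma FF_add2 (hd : 1 ≤ d) (M : ℕ) : FF d (M + 2 * d) = FF d M + 4 * d := by
  rw [show M + 2 * d = M + d + d by ring, FF_add hd, FF_add hd]
  ring

lemma FF_small {M : ℕ} (h2 : M < d) : FF d M = M + d / 2 := by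
  rw [FF, Nat.div_eq_of_lt h2]
  push_cast
  ring

lemma GG_add (hd : 1 ≤ d) (M : ℕ) : GG d (M + d) = GG d M + 2 * d := by
  rw [GG, GG, Nat.add_div_right M (by omega),
    show 2 * (M + d) = 2 * M + d + d by ring,
    Nat.add_div_right _ (by omega), Nat.add_div_right _ (by omega)]
  push_cast
  ring

lemma GG_d (hd : 1 ≤ d) : GG d d = 2 * d := by
  rw [GG, Nat.div_self (by omega), Nat.mul_div_cancel _ (by omega : 0 < d)]
  push_cast
  ring

lemma GG_small {M : ℕ} (h2 : M < d) :
    GG d M = M + if d ≤ 2 * M then (d : ℚ) else 0 := by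
  rw [GG, Nat.div_eq_of_lt h2]
  split_ifs with h
  · rw [show 2 * M / d = 1 from Nat.div_eq_of_lt_le (by omega) (by omega)]
    push_cast
    ring
  · rw [Nat.div_eq_of_lt (by omega)]
    push_cast
    ring

/-- The block sum `∑_{i=a+1}^{a+d} FF d (2i)`. -/
noncomputable def Sblock (d a : ℕ) : ℚ := ∑ i ∈ Finset.Icc (a + 1) (a + d), FF d (2 * i)

lemma Sblock_succ (hd : 3 ≤ d) (a : ℕ) : Sblock d (a + 1) = Sblock d a + 4 * d := by
  have h1 : Finset.Icc (a + 1) (a + d + 1) = insert (a + 1) (Finset.Icc (a + 2) (a + d + 1)) := by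
    ext i
    simp only [Finset.mem_Icc, Finset.mem_insert]
    omega
  have h2 : (∑ i ∈ Finset.Icc (a + 1) (a + d + 1), FF d (2 * i))
      = FF d (2 * (a + 1)) + Sblock d (a + 1) := by
    rw [h1, Finset.sum_insert (by simp [Finset.mem_Icc])]
    rw [Sblock, show a + 1 + 1 = a + 2 by ring, show a + 1 + d = a + d + 1 by ring]
  have h3 : (∑ i ∈ Finset.Icc (a + 1) (a + d + 1), FF d (2 * i))
      = Sblock d a + FF d (2 * (a + d + 1)) := by
    rw [Finset.sum_Icc_succ_top (by omega)]
    rw [Sblock]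
  have h4 : FF d (2 * (a + d + 1)) = FF d (2 * (a + 1)) + 4 * d := by
    rw [show 2 * (a + d + 1) = 2 * (a + 1) + 2 * d by ring, FF_add2 (by omega)]
  rw [h4] at h3
  rw [h3] at h2
  linarith

lemma Sblock_eq (hd : 3 ≤ d) (a : ℕ) : Sblock d a = 4 * d * a + Sblock d 0 := by
  induction a with
  | zero => simp
  | succ n ih =>
    rw [Sblock_succ hd n, ih]
    push_cast
    ring

lemma two_mul_sum_ge (A : Finset ℕ) : A.card * (A.card - 1) ≤ 2 * ∑ x ∈ A, x := by
  classical
  induction A using Finset.strongInduction with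
  | _ A ih =>
    rcases A.eq_empty_or_nonempty with rfl | hA
    · simp
    · set M := A.max' hA with hM
      have hMmem : M ∈ A := A.max'_mem hA
      have hsub : A ⊆ Finset.range (M + 1) := by
        intro x hx
        rw [Finset.mem_range]
        have := A.le_max' x hx
        omega
      have hcard : A.card ≤ M + 1 := by
        have := Finset.card_le_card hsub
        rwa [Finset.card_range] at this
      have hih := ih (A.erase M) (Finset.erase_ssubset hMmem)
      have hce : (A.erase M).card = A.card - 1 := Finset.card_erase_of_mem hMmem
      have hsum : M + ∑ x ∈ A.erase M, x = ∑ x ∈ A, x := by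
        have := Finset.add_sum_erase A id hMmem
        simpa using this
      have hc1 : 1 ≤ A.card := Finset.card_pos.2 hA
      rw [hce] at hih
      rcases Nat.lt_or_ge A.card 2 with h2 | h2
      · have h1 : A.card - 1 = 0 := by omega
        rw [h1, Nat.mul_zero]
        exact Nat.zero_le _
      · set k := A.card - 2 with hk
        have hc : A.card = k + 2 := by omega
        have h1 : A.card - 1 = k + 1 := by omega
        rw [h1] at hih
        have h2' : k + 1 - 1 = k := by omega
        rw [h2'] at hih
        rw [hc, show k + 2 - 1 = k + 1 by omega]
        have hM2 : k + 1 ≤ M := by omega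
        nlinarith [hih, hsum, hM2]

lemma floor_le_sum (A B : Finset ℕ) :
    (A.card + B.card - 1) ^ 2 / 4 ≤ (∑ x ∈ A, x) + ∑ y ∈ B, y := by
  have hA := two_mul_sum_ge A
  have hB := two_mul_sum_ge B
  set s := A.card
  set t := B.card
  set SA := ∑ x ∈ A, x
  set SB := ∑ y ∈ B, y
  have hSA0 : 0 ≤ (SA : ℤ) := Int.natCast_nonneg _
  have hSB0 : 0 ≤ (SB : ℤ) := Int.natCast_nonneg _
  have hA' : (s : ℤ) * s - s ≤ 2 * SA := by
    rcases Nat.eq_zero_or_pos s with hs | hs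
    · rw [hs]; norm_num
    · have h := hA
      zify [hs] at h
      nlinarith [h]
  have hB' : (t : ℤ) * t - t ≤ 2 * SB := by
    rcases Nat.eq_zero_or_pos t with ht | ht
    · rw [ht]; norm_num
    · have h := hB
      zify [ht] at h
      nlinarith [h]
  have key : (s + t - 1) ^ 2 ≤ 4 * (SA + SB) + 1 := by
    rcases Nat.eq_zero_or_pos (s + t) with h0 | h0
    · have h00 : s + t - 1 = 0 := by omega
      rw [h00]
      omega
    · have h1 : 1 ≤ s + t := h0
      zify [h1]
      nlinarith [sq_nonneg ((s : ℤ) - t), hA', hB']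
  calc (s + t - 1) ^ 2 / 4 ≤ (4 * (SA + SB) + 1) / 4 := Nat.div_le_div_right key
    _ = SA + SB := by omega

lemma srank_hook {A B : Finset ℕ} {x0 : ℕ} (hx0 : x0 ∈ A) (hx0d : x0 + d ∉ A) :
    srank (insert (x0 + d) (A.erase x0)) B = srank A B + d := by
  have hnm : x0 + d ∉ A.erase x0 := fun h => hx0d (Finset.mem_of_mem_erase h)
  have hcard : (insert (x0 + d) (A.erase x0)).card = A.card := by
    rw [Finset.card_insert_of_notMem hnm, Finset.card_erase_of_mem hx0]
    have : 1 ≤ A.card := Finset.card_pos.2 ⟨x0, hx0⟩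
    omega
  have hx0le : x0 ≤ ∑ x ∈ A, x := Finset.single_le_sum (fun i _ => Nat.zero_le i) hx0
  have hsum : (∑ x ∈ insert (x0 + d) (A.erase x0), x) = (∑ x ∈ A, x) + d := by
    rw [Finset.sum_insert hnm]
    have := Finset.add_sum_erase A id hx0
    simp only [id] at this
    omega
  have hfl := floor_le_sum A B
  rw [srank, srank, hcard, hsum]
  omega

end DHookAux

namespace DHookAux

lemma sum_indicator (T : Finset ℕ) (P : ℕ → Prop) [DecidablePred P] (c : ℚ) :
    (∑ z ∈ T, if P z then c else 0) = (T.filter P).card * c := by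
  rw [← Finset.sum_filter, Finset.sum_const, nsmul_eq_mul]

lemma pair_insert (p : ℕ → ℕ → ℚ) {T : Finset ℕ} {a : ℕ} (ha : a ∉ T) :
    (∑ x ∈ insert a T, ∑ x' ∈ (insert a T).filter (· < x), p x x')
      = (∑ x ∈ T, ∑ x' ∈ T.filter (· < x), p x x')
        + ∑ z ∈ T, (if z < a then p a z else p z a) := by
  classical
  rw [Finset.sum_insert ha]
  have h1 : (insert a T).filter (· < a) = T.filter (· < a) := by
    rw [Finset.filter_insert, if_neg (lt_irrefl a)]
  have h2 : ∀ x ∈ T, (∑ x' ∈ (insert a T).filter (· < x), p x x')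
      = (∑ x' ∈ T.filter (· < x), p x x') + (if a < x then p x a else 0) := by
    intro x hx
    rw [Finset.filter_insert]
    split_ifs with h
    · rw [Finset.sum_insert (fun hmem => ha (Finset.mem_of_mem_filter a hmem))]
      ring
    · ring
  rw [h1, Finset.sum_congr rfl h2, Finset.sum_add_distrib]
  have h3 : (∑ x' ∈ T.filter (· < a), p a x') = ∑ z ∈ T, (if z < a then p a z else 0) := by
    rw [Finset.sum_filter]
  have h4 : (∑ z ∈ T, (if z < a then p a z else 0))
      + (∑ x ∈ T, if a < x then p x a else 0)
      = ∑ z ∈ T, (if z < a then p a z else p z a) := by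
    rw [← Finset.sum_add_distrib]
    refine Finset.sum_congr rfl fun z hz => ?_
    have hza : z ≠ a := fun h => ha (h ▸ hz)
    rcases Nat.lt_trichotomy z a with h | h | h
    · rw [if_pos h, if_neg (by omega), if_pos h]; ring
    · exact absurd h hza
    · rw [if_neg (by omega), if_pos h, if_neg (by omega)]; ring
  rw [← h4, h3]
  ring

variable {d : ℕ}

lemma cast_sub_q {a b : ℕ} (h : b ≤ a) : ((a - b : ℕ) : ℚ) = (a : ℚ) - b := by
  rw [Nat.cast_sub h]

lemma pairdiff_z (hd : 3 ≤ d) {x0 z : ℕ} (hz : z ≠ x0) (hzd : z ≠ x0 + d) :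
    ((if z < x0 + d then 2 * (z : ℚ) + FF d (x0 + d - z)
        else 2 * ((x0 : ℚ) + (d : ℚ)) + FF d (z - (x0 + d)))
      - (if z < x0 then 2 * (z : ℚ) + FF d (x0 - z) else 2 * (x0 : ℚ) + FF d (z - x0)))
      = (if z < x0 then (2 * d : ℚ) else 0) + (if x0 < z ∧ z < x0 + d then (d : ℚ) else 0) := by
  rcases Nat.lt_trichotomy z x0 with h | h | h
  · rw [if_pos (show z < x0 + d by omega), if_pos h, if_pos h, if_neg (by omega),
      show x0 + d - z = (x0 - z) + d by omega, FF_add (by omega)]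
    ring
  · exact absurd h hz
  · rcases Nat.lt_trichotomy z (x0 + d) with h2 | h2 | h2
    · rw [if_pos h2, if_neg (show ¬ z < x0 by omega), if_neg (show ¬ z < x0 by omega),
        if_pos (show x0 < z ∧ z < x0 + d from ⟨h, h2⟩),
        FF_small (show x0 + d - z < d by omega), FF_small (show z - x0 < d by omega),
        cast_sub_q (show z ≤ x0 + d by omega), cast_sub_q (show x0 ≤ z by omega)]
      push_cast
      ring
    · exact absurd h2 hzd
    · rw [if_neg (show ¬ z < x0 + d by omega), if_neg (show ¬ z < x0 by omega),
        if_neg (show ¬ z < x0 by omega), if_neg (show ¬ (x0 < z ∧ z < x0 + d) by omega),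
        show z - x0 = (z - (x0 + d)) + d by omega, FF_add (by omega)]
      ring

lemma MM_left (hd : 3 ≤ d) (u y : ℕ) (h : y < u) :
    CycRep.MM d u y = 2 * (y : ℚ) + GG d (u - y) := by
  rw [CycRep.MM, if_neg (by omega), min_eq_right (by omega : y ≤ u),
    max_eq_left (by omega : y ≤ u)]

lemma MM_right (hd : 3 ≤ d) (u y : ℕ) (h : u < y) :
    CycRep.MM d u y = 2 * (u : ℚ) + GG d (y - u) := by
  rw [CycRep.MM, if_neg (by omega), min_eq_left (by omega : u ≤ y),
    max_eq_right (by omega : u ≤ y)]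

lemma mixdiff_y (hd : 3 ≤ d) (hodd : Odd d) (x0 y : ℕ) :
    CycRep.MM d (x0 + d) y - CycRep.MM d x0 y
      = if 2 * y < 2 * x0 + d then 2 * (d : ℚ) else 0 := by
  obtain ⟨e, he⟩ := hodd
  rcases Nat.lt_trichotomy y x0 with h | h | h
  · rw [MM_left hd _ _ (by omega), MM_left hd _ _ h, if_pos (by omega),
      show x0 + d - y = (x0 - y) + d by omega, GG_add (by omega)]
    ring
  · subst h
    rw [MM_left hd _ _ (by omega), CycRep.MM, if_pos rfl, if_pos (by omega),
      show y + d - y = d by omega, GG_d (by omega)]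
    ring
  · rcases Nat.lt_trichotomy y (x0 + d) with h2 | h2 | h2
    · rw [MM_left hd _ _ h2, MM_right hd _ _ h,
        GG_small (show x0 + d - y < d by omega), GG_small (show y - x0 < d by omega),
        cast_sub_q (show y ≤ x0 + d by omega), cast_sub_q (show x0 ≤ y by omega)]
      push_cast
      split_ifs <;> (first | ring1 | (exfalso; omega))
    · subst h2
      rw [CycRep.MM, if_pos rfl, MM_right hd _ _ (by omega), if_neg (by omega),
        show x0 + d - x0 = d by omega, GG_d (by omega)]
      push_cast
      ring
    · rw [MM_right hd _ _ (by omega), MM_right hd _ _ (by omega), if_neg (by omega),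
        show y - x0 = (y - (x0 + d)) + d by omega, GG_add (by omega)]
      push_cast
      ring

end DHookAux

namespace DHookAux

variable {d : ℕ} {A : Finset ℕ}

/-- Downward closure along `d`-steps. -/
lemma downClosed (hA : ∀ x ∈ A, d ≤ x → x - d ∈ A) (hd : 1 ≤ d) :
    ∀ k x, x ∈ A → ∀ y, x = y + d * k → y ∈ A := by
  intro k
  induction k with
  | zero =>
    intro x hx y hy
    have : x = y := by omega
    rwa [this] at hx
  | succ n ih =>
    intro x hx y hy
    have hmul : d * (n + 1) = d * n + d := Nat.mul_succ d n
    have hdx : d ≤ x := by omega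
    have hx' : x - d ∈ A := hA x hx hdx
    exact ih (x - d) hx' y (by omega)

/-- The chain of elements of `A` above `z` in the residue class of `z` mod `d`. -/
def chainW (d : ℕ) (A : Finset ℕ) (z : ℕ) : Finset ℕ :=
  A.filter fun w => z ≤ w ∧ w % d = z % d

lemma mem_chainW {w z : ℕ} : w ∈ chainW d A z ↔ w ∈ A ∧ (z ≤ w ∧ w % d = z % d) :=
  Finset.mem_filter

lemma chainW_max_spec (hA : ∀ x ∈ A, d ≤ x → x - d ∈ A) (hd1 : 1 ≤ d) {z : ℕ}
    (h : (chainW d A z).Nonempty) :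
    (chainW d A z).max' h ∈ A ∧ z ≤ (chainW d A z).max' h
      ∧ ((chainW d A z).max' h) % d = z % d ∧ (chainW d A z).max' h + d ∉ A := by
  have hMW : (chainW d A z).max' h ∈ chainW d A z := (chainW d A z).max'_mem h
  rw [mem_chainW] at hMW
  obtain ⟨hMA, hzM, hMmod⟩ := hMW
  refine ⟨hMA, hzM, hMmod, ?_⟩
  intro hMd
  have hmem : (chainW d A z).max' h + d ∈ chainW d A z := by
    rw [mem_chainW]
    exact ⟨hMd, by omega, by rw [Nat.add_mod_right, hMmod]⟩
  have := (chainW d A z).le_max' _ hmem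
  omega

lemma chainW_max_eq (hA : ∀ x ∈ A, d ≤ x → x - d ∈ A) (hd1 : 1 ≤ d) {x z : ℕ}
    (hxW : x ∈ chainW d A z) (hxd : x + d ∉ A) (h : (chainW d A z).Nonempty) :
    (chainW d A z).max' h = x := by
  have hxW' := hxW
  rw [mem_chainW] at hxW
  obtain ⟨hxA, hzx, hxmod⟩ := hxW
  refine le_antisymm ?_ (Finset.le_max' _ x hxW')
  apply Finset.max'_le
  intro w hw
  rw [mem_chainW] at hw
  obtain ⟨hwA, hwz, hwmod⟩ := hw
  by_contra hcon
  push_neg at hcon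
  have hmodeq : w ≡ x [MOD d] := by
    unfold Nat.ModEq
    rw [hwmod, hxmod]
  have hdvd : d ∣ (w - x) := (Nat.modEq_iff_dvd' (by omega)).1 hmodeq.symm
  obtain ⟨k, hk⟩ := hdvd
  have hk1 : 1 ≤ k := by
    rcases Nat.eq_zero_or_pos k with rfl | hpos
    · rw [Nat.mul_zero] at hk
      omega
    · exact hpos
  obtain ⟨k', rfl⟩ : ∃ k', k = k' + 1 := ⟨k - 1, by omega⟩
  have hmul : d * (k' + 1) = d * k' + d := Nat.mul_succ d k'
  exact hxd (downClosed hA hd1 k' w hwA (x + d) (by omega))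

/-- The window/addable-position bijection for a `d`-core. -/
lemma window_card_eq (hA : ∀ x ∈ A, d ≤ x → x - d ∈ A) (hd : 3 ≤ d)
    {x0 : ℕ} (hx0 : x0 ∈ A) (hx0d : x0 + d ∉ A) :
    (A.filter fun z => x0 < z ∧ z < x0 + d).card
      = (A.filter fun x => x0 < x ∧ x + d ∉ A).card := by
  classical
  have hd1 : 1 ≤ d := by omega
  have hWne : ∀ z, z ∈ A → (chainW d A z).Nonempty := fun z hz =>
    ⟨z, by rw [mem_chainW]; exact ⟨hz, le_refl z, rfl⟩⟩
  refine Finset.card_bij'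
    (fun z (hz : z ∈ A.filter fun z => x0 < z ∧ z < x0 + d) =>
      (chainW d A z).max' (hWne z (Finset.mem_of_mem_filter z hz)))
    (fun x (hx : x ∈ A.filter fun x => x0 < x ∧ x + d ∉ A) =>
      x0 + 1 + (x - x0 - 1) % d) ?_ ?_ ?_ ?_
  · -- forward membership
    intro z hz
    beta_reduce
    obtain ⟨hzA, hz1, hz2⟩ := Finset.mem_filter.1 hz
    obtain ⟨hMA, hzM, hMmod, hMd⟩ :=
      chainW_max_spec hA hd1 (hWne z (Finset.mem_of_mem_filter z hz))
    exact Finset.mem_filter.2 ⟨hMA, by omega, hMd⟩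
  · -- backward membership
    intro x hx
    beta_reduce
    obtain ⟨hxA, hx1, hx2⟩ := Finset.mem_filter.1 hx
    have hs : (x - x0 - 1) % d < d := Nat.mod_lt _ (by omega)
    have hsq := Nat.div_add_mod (x - x0 - 1) d
    have hxg : x = (x0 + 1 + (x - x0 - 1) % d) + d * ((x - x0 - 1) / d) := by omega
    have hgA : x0 + 1 + (x - x0 - 1) % d ∈ A := downClosed hA hd1 _ x hxA _ hxg
    have hne : x0 + 1 + (x - x0 - 1) % d ≠ x0 + d := by
      intro heq
      have hx' : x = (x0 + d) + d * ((x - x0 - 1) / d) := by omega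
      exact hx0d (downClosed hA hd1 _ x hxA _ hx')
    exact Finset.mem_filter.2 ⟨hgA, by omega, by omega⟩
  · -- left inverse
    intro z hz
    obtain ⟨hzA, hz1, hz2⟩ := Finset.mem_filter.1 hz
    obtain ⟨hMA, hzM, hMmod, hMd⟩ :=
      chainW_max_spec hA hd1 (hWne z (Finset.mem_of_mem_filter z hz))
    have hmodeq : (chainW d A z).max' (hWne z (Finset.mem_of_mem_filter z hz)) ≡ z [MOD d] :=
      hMmod
    have hdvd : d ∣ ((chainW d A z).max' (hWne z (Finset.mem_of_mem_filter z hz)) - z) :=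
      (Nat.modEq_iff_dvd' hzM).1 hmodeq.symm
    obtain ⟨k, hk⟩ := hdvd
    have h1 : (chainW d A z).max' (hWne z (Finset.mem_of_mem_filter z hz)) - x0 - 1
        = (z - x0 - 1) + d * k := by omega
    show x0 + 1 + ((chainW d A z).max' (hWne z (Finset.mem_of_mem_filter z hz)) - x0 - 1) % d = z
    rw [h1, Nat.add_mul_mod_self_left, Nat.mod_eq_of_lt (show z - x0 - 1 < d by omega)]
    omega
  · -- right inverse
    intro x hx
    obtain ⟨hxA, hx1, hx2⟩ := Finset.mem_filter.1 hx
    have hs : (x - x0 - 1) % d < d := Nat.mod_lt _ (by omega)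
    have hsq := Nat.div_add_mod (x - x0 - 1) d
    have hxg : x = (x0 + 1 + (x - x0 - 1) % d) + d * ((x - x0 - 1) / d) := by omega
    have hxmod : x % d = (x0 + 1 + (x - x0 - 1) % d) % d := by
      conv_lhs => rw [hxg]
      rw [Nat.add_mul_mod_self_left]
    have hxW : x ∈ chainW d A (x0 + 1 + (x - x0 - 1) % d) := by
      rw [mem_chainW]
      exact ⟨hxA, by omega, hxmod⟩
    exact chainW_max_eq hA hd1 hxW hx2 _

end DHookAux

namespace DHookAux

variable {d : ℕ}

lemma Icc_one_eq_Ioc (m : ℕ) : Finset.Icc 1 m = Finset.Ioc 0 m := by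
  ext a
  simp only [Finset.mem_Icc, Finset.mem_Ioc]
  omega

lemma Icc_succ_eq_Ioc (a b : ℕ) : Finset.Icc (a + 1) b = Finset.Ioc a b := by
  ext i
  simp only [Finset.mem_Icc, Finset.mem_Ioc]
  omega

lemma sum_Icc_block (f : ℕ → ℚ) (n k : ℕ) :
    (∑ i ∈ Finset.Icc 1 (n + k), f i) - (∑ i ∈ Finset.Icc 1 n, f i)
      = ∑ i ∈ Finset.Icc (n + 1) (n + k), f i := by
  rw [Icc_one_eq_Ioc, Icc_one_eq_Ioc, Icc_succ_eq_Ioc]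
  have := Finset.sum_Ioc_consecutive f (show (0 : ℕ) ≤ n by omega)
    (show n ≤ n + k by omega)
  linarith

lemma sum_insert_erase_diff (A : Finset ℕ) {x0 t : ℕ} (hx0 : x0 ∈ A) (ht : t ∉ A)
    (f : ℕ → ℚ) :
    (∑ x ∈ insert t (A.erase x0), f x) = (∑ x ∈ A, f x) + f t - f x0 := by
  rw [Finset.sum_insert (fun h => ht (Finset.mem_of_mem_erase h))]
  have h2 : f x0 + ∑ x ∈ A.erase x0, f x = ∑ x ∈ A, f x := Finset.add_sum_erase A f hx0
  linarith

lemma erase_filter_lt (A : Finset ℕ) (x0 : ℕ) :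
    (A.erase x0).filter (· < x0) = A.filter (· < x0) := by
  ext a
  simp only [Finset.mem_filter, Finset.mem_erase]
  constructor
  · rintro ⟨⟨h1, h2⟩, h3⟩
    exact ⟨h2, h3⟩
  · rintro ⟨h1, h2⟩
    exact ⟨⟨by omega, h1⟩, h2⟩

lemma erase_filter_window (A : Finset ℕ) (x0 : ℕ) :
    ((A.erase x0).filter fun z => x0 < z ∧ z < x0 + d)
      = A.filter fun z => x0 < z ∧ z < x0 + d := by
  ext a
  simp only [Finset.mem_filter, Finset.mem_erase]
  constructor
  · rintro ⟨⟨h1, h2⟩, h3⟩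
    exact ⟨h2, h3⟩
  · rintro ⟨h1, h2⟩
    exact ⟨⟨by omega, h1⟩, h2⟩

lemma DHook_eq (hd : 3 ≤ d) (hodd : Odd d) {A B : Finset ℕ} (hAB : IsSymbolCore d A B)
    {x0 : ℕ} (hx0 : x0 ∈ A) (hx0d : x0 + d ∉ A) :
    DHook d A B x0
      = d * (4 * ((srank A B : ℚ) - (x0 : ℚ))
          + 2 * ((A.filter (· < x0)).card : ℚ)
          + 2 * ((B.filter fun y => 2 * y < 2 * x0 + d).card : ℚ)
          + ((A.filter fun x => x0 < x ∧ x + d ∉ A).card : ℚ)) := by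
  classical
  have hTd : x0 + d ∉ A.erase x0 := fun h => hx0d (Finset.mem_of_mem_erase h)
  have hTx : x0 ∉ A.erase x0 := Finset.notMem_erase x0 A
  have hins : insert x0 (A.erase x0) = A := Finset.insert_erase hx0
  have e1 : srank (insert (x0 + d) (A.erase x0)) B = srank A B + d := srank_hook hx0 hx0d
  rw [DHook, CycRep.Bd_NumS hd, CycRep.Bd_DenS hd, CycRep.Bd_NumS hd, CycRep.Bd_DenS hd, e1]
  -- the rank-product difference
  have h1 : (∑ i ∈ Finset.Icc 1 (srank A B + d), FF d (2 * i))
      - (∑ i ∈ Finset.Icc 1 (srank A B), FF d (2 * i)) = Sblock d (srank A B) := by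
    rw [sum_Icc_block (fun i => FF d (2 * i)) (srank A B) d, Sblock]
  -- the DenS difference (A-part)
  have h2 : (∑ x ∈ insert (x0 + d) (A.erase x0), ∑ j ∈ Finset.Icc 1 x, FF d (2 * j))
      = (∑ x ∈ A, ∑ j ∈ Finset.Icc 1 x, FF d (2 * j)) + Sblock d x0 := by
    rw [sum_insert_erase_diff A hx0 hx0d (fun x => ∑ j ∈ Finset.Icc 1 x, FF d (2 * j))]
    have := sum_Icc_block (fun j => FF d (2 * j)) x0 d
    rw [Sblock]
    linarith
  -- the mixed difference
  have h3 : (∑ x ∈ insert (x0 + d) (A.erase x0), ∑ y ∈ B, CycRep.MM d x y)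
      = (∑ x ∈ A, ∑ y ∈ B, CycRep.MM d x y)
        + 2 * d * ((B.filter fun y => 2 * y < 2 * x0 + d).card : ℚ) := by
    rw [sum_insert_erase_diff A hx0 hx0d (fun x => ∑ y ∈ B, CycRep.MM d x y)]
    have hsum : (∑ y ∈ B, CycRep.MM d (x0 + d) y) - (∑ y ∈ B, CycRep.MM d x0 y)
        = ∑ y ∈ B, (CycRep.MM d (x0 + d) y - CycRep.MM d x0 y) := by
      rw [Finset.sum_sub_distrib]
    have hpt : (∑ y ∈ B, (CycRep.MM d (x0 + d) y - CycRep.MM d x0 y))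
        = ∑ y ∈ B, (if 2 * y < 2 * x0 + d then 2 * (d : ℚ) else 0) :=
      Finset.sum_congr rfl fun y _ => mixdiff_y hd hodd x0 y
    rw [sum_indicator] at hpt
    linarith [hsum, hpt]
  -- the pair difference
  have hApair : (∑ x ∈ A, ∑ x' ∈ A.filter (· < x), (2 * (x' : ℚ) + FF d (x - x')))
      = (∑ x ∈ A.erase x0, ∑ x' ∈ (A.erase x0).filter (· < x), (2 * (x' : ℚ) + FF d (x - x')))
        + ∑ z ∈ A.erase x0, (if z < x0 then (2 * (z : ℚ) + FF d (x0 - z))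
            else (2 * (x0 : ℚ) + FF d (z - x0))) := by
    conv_lhs => rw [← hins]
    exact pair_insert (fun u v => 2 * (v : ℚ) + FF d (u - v)) hTx
  have hA'pair : (∑ x ∈ insert (x0 + d) (A.erase x0),
        ∑ x' ∈ (insert (x0 + d) (A.erase x0)).filter (· < x), (2 * (x' : ℚ) + FF d (x - x')))
      = (∑ x ∈ A.erase x0, ∑ x' ∈ (A.erase x0).filter (· < x), (2 * (x' : ℚ) + FF d (x - x')))
        + ∑ z ∈ A.erase x0, (if z < x0 + d then (2 * (z : ℚ) + FF d (x0 + d - z))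
            else (2 * ((x0 + d : ℕ) : ℚ) + FF d (z - (x0 + d)))) :=
    pair_insert (fun u v => 2 * (v : ℚ) + FF d (u - v)) hTd
  have hzdiff : (∑ z ∈ A.erase x0, (if z < x0 + d then (2 * (z : ℚ) + FF d (x0 + d - z))
            else (2 * ((x0 + d : ℕ) : ℚ) + FF d (z - (x0 + d)))))
      - (∑ z ∈ A.erase x0, (if z < x0 then (2 * (z : ℚ) + FF d (x0 - z))
            else (2 * (x0 : ℚ) + FF d (z - x0))))
      = 2 * d * ((A.filter (· < x0)).card : ℚ)
        + d * (((A.filter fun z => x0 < z ∧ z < x0 + d)).card : ℚ) := by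
    rw [← Finset.sum_sub_distrib]
    have hpt : ∀ z ∈ A.erase x0,
        ((if z < x0 + d then (2 * (z : ℚ) + FF d (x0 + d - z))
            else (2 * ((x0 + d : ℕ) : ℚ) + FF d (z - (x0 + d))))
          - (if z < x0 then (2 * (z : ℚ) + FF d (x0 - z))
            else (2 * (x0 : ℚ) + FF d (z - x0))))
        = (if z < x0 then (2 * d : ℚ) else 0)
          + (if x0 < z ∧ z < x0 + d then (d : ℚ) else 0) := by
      intro z hz
      have hz1 : z ≠ x0 := Finset.ne_of_mem_erase hz
      have hz2 : z ≠ x0 + d := fun h => hTd (h ▸ hz)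
      rw [Nat.cast_add]
      exact pairdiff_z hd hz1 hz2
    rw [Finset.sum_congr rfl hpt, Finset.sum_add_distrib, sum_indicator, sum_indicator,
      erase_filter_lt, erase_filter_window]
    ring
  -- the window/addable bijection
  have hwin : (((A.filter fun z => x0 < z ∧ z < x0 + d)).card : ℚ)
      = (((A.filter fun x => x0 < x ∧ x + d ∉ A)).card : ℚ) := by
    rw [window_card_eq hAB.1 hd hx0 hx0d]
  -- Sblock difference
  have hSb : Sblock d (srank A B) - Sblock d x0 = 4 * d * ((srank A B : ℚ) - (x0 : ℚ)) := by
    rw [Sblock_eq hd (srank A B), Sblock_eq hd x0]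
    ring
  linear_combination h1 + hA'pair - hApair + hzdiff + h3 - h2 + hSb + (d : ℚ) * hwin
end DHookAux

/-- For `d ≥ 3` odd, `{A, B}` a `d`-core symbol of rank `n`, and `x₀ ∈ A` with
`x₀ + d ∉ A`:
`D(x₀) = d·(4(n − x₀) + 2·#{x ∈ A : x < x₀} + 2·#{y ∈ B : x₀ − y > −d/2}
  + #{x ∈ A : x > x₀ ∧ x + d ∉ A})`;
consequently `D` is strictly decreasing on addable positions. -/
theorem DHook_formula_and_strict_anti (d : ℕ) (hd : 3 ≤ d) (hodd : Odd d)
    (A B : Finset ℕ) (hAB : IsSymbolCore d A B)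
    (x0 : ℕ) (hx0 : x0 ∈ A) (hx0d : x0 + d ∉ A) :
    DHook d A B x0
      = d * (4 * ((srank A B : ℚ) - (x0 : ℚ))
          + 2 * ((A.filter (· < x0)).card : ℚ)
          + 2 * ((B.filter fun y => 2 * y < 2 * x0 + d).card : ℚ)
          + ((A.filter fun x => x0 < x ∧ x + d ∉ A).card : ℚ)) ∧
    ∀ x1 ∈ A, x0 < x1 → x1 + d ∉ A → DHook d A B x1 < DHook d A B x0 := by
  classical
  refine ⟨DHookAux.DHook_eq hd hodd hAB hx0 hx0d, ?_⟩
  intro x1 hx1 hlt hx1d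
  rw [DHookAux.DHook_eq hd hodd hAB hx0 hx0d, DHookAux.DHook_eq hd hodd hAB hx1 hx1d]
  obtain ⟨e, he⟩ := hodd
  have hd0 : (0 : ℚ) < d := by
    have : (0 : ℕ) < d := by omega
    exact_mod_cast this
  -- bound on the `< x` counts
  have hclnat : (A.filter (· < x1)).card ≤ (A.filter (· < x0)).card + (x1 - x0) := by
    have hsub : A.filter (· < x1) ⊆ A.filter (· < x0) ∪ Finset.Ico x0 x1 := by
      intro a ha
      obtain ⟨haA, halt⟩ := Finset.mem_filter.1 ha
      rw [Finset.mem_union, Finset.mem_filter, Finset.mem_Ico]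
      rcases Nat.lt_or_ge a x0 with h | h
      · exact Or.inl ⟨haA, h⟩
      · exact Or.inr ⟨h, halt⟩
    calc (A.filter (· < x1)).card ≤ (A.filter (· < x0) ∪ Finset.Ico x0 x1).card :=
          Finset.card_le_card hsub
      _ ≤ (A.filter (· < x0)).card + (Finset.Ico x0 x1).card := Finset.card_union_le _ _
      _ = (A.filter (· < x0)).card + (x1 - x0) := by rw [Nat.card_Ico]
  -- bound on the `B` counts
  have hcBnat : (B.filter fun y => 2 * y < 2 * x1 + d).card
      ≤ (B.filter fun y => 2 * y < 2 * x0 + d).card + (x1 - x0) := by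
    have hsub : (B.filter fun y => 2 * y < 2 * x1 + d)
        ⊆ (B.filter fun y => 2 * y < 2 * x0 + d) ∪ Finset.Ico (x0 + e + 1) (x1 + e + 1) := by
      intro a ha
      obtain ⟨haB, halt⟩ := Finset.mem_filter.1 ha
      rw [Finset.mem_union, Finset.mem_filter, Finset.mem_Ico]
      rcases Nat.lt_or_ge (2 * a) (2 * x0 + d) with h | h
      · exact Or.inl ⟨haB, h⟩
      · exact Or.inr ⟨by omega, by omega⟩
    calc (B.filter fun y => 2 * y < 2 * x1 + d).card
        ≤ ((B.filter fun y => 2 * y < 2 * x0 + d) ∪ Finset.Ico (x0 + e + 1) (x1 + e + 1)).card :=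
          Finset.card_le_card hsub
      _ ≤ (B.filter fun y => 2 * y < 2 * x0 + d).card
            + (Finset.Ico (x0 + e + 1) (x1 + e + 1)).card := Finset.card_union_le _ _
      _ = (B.filter fun y => 2 * y < 2 * x0 + d).card + (x1 - x0) := by
          rw [Nat.card_Ico]
          omega
  -- bound on the addable counts
  have hcUnat : (A.filter fun x => x1 < x ∧ x + d ∉ A).card + 1
      ≤ (A.filter fun x => x0 < x ∧ x + d ∉ A).card := by
    have hx1nm : x1 ∉ A.filter fun x => x1 < x ∧ x + d ∉ A := by
      intro h
      exact absurd ((Finset.mem_filter.1 h).2.1) (lt_irrefl x1)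
    have hsub : insert x1 (A.filter fun x => x1 < x ∧ x + d ∉ A)
        ⊆ A.filter fun x => x0 < x ∧ x + d ∉ A := by
      intro a ha
      rcases Finset.mem_insert.1 ha with rfl | ha'
      · exact Finset.mem_filter.2 ⟨hx1, hlt, hx1d⟩
      · obtain ⟨haA, h1, h2⟩ := Finset.mem_filter.1 ha'
        exact Finset.mem_filter.2 ⟨haA, by omega, h2⟩
    calc (A.filter fun x => x1 < x ∧ x + d ∉ A).card + 1
        = (insert x1 (A.filter fun x => x1 < x ∧ x + d ∉ A)).card := by
          rw [Finset.card_insert_of_notMem hx1nm]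
      _ ≤ (A.filter fun x => x0 < x ∧ x + d ∉ A).card := Finset.card_le_card hsub
  -- cast to ℚ and finish
  have hx01 : (x0 : ℚ) + 1 ≤ x1 := by exact_mod_cast Nat.succ_le_of_lt hlt
  have hsub : ((x1 - x0 : ℕ) : ℚ) = (x1 : ℚ) - x0 := by
    rw [Nat.cast_sub (le_of_lt hlt)]
  have hcl : ((A.filter (· < x1)).card : ℚ)
      ≤ ((A.filter (· < x0)).card : ℚ) + ((x1 : ℚ) - x0) := by
    rw [← hsub]
    exact_mod_cast hclnat
  have hcB : ((B.filter fun y => 2 * y < 2 * x1 + d).card : ℚ)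
      ≤ ((B.filter fun y => 2 * y < 2 * x0 + d).card : ℚ) + ((x1 : ℚ) - x0) := by
    rw [← hsub]
    exact_mod_cast hcBnat
  have hcU : ((A.filter fun x => x1 < x ∧ x + d ∉ A).card : ℚ) + 1
      ≤ ((A.filter fun x => x0 < x ∧ x + d ∉ A).card : ℚ) := by
    exact_mod_cast hcUnat
  have hE : (4 * ((srank A B : ℚ) - (x1 : ℚ))
        + 2 * ((A.filter (· < x1)).card : ℚ)
        + 2 * ((B.filter fun y => 2 * y < 2 * x1 + d).card : ℚ)
        + ((A.filter fun x => x1 < x ∧ x + d ∉ A).card : ℚ))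
      < (4 * ((srank A B : ℚ) - (x0 : ℚ))
        + 2 * ((A.filter (· < x0)).card : ℚ)
        + 2 * ((B.filter fun y => 2 * y < 2 * x0 + d).card : ℚ)
        + ((A.filter fun x => x0 < x ∧ x + d ∉ A).card : ℚ)) := by
    linarith [hcl, hcB, hcU, hx01]
  exact mul_lt_mul_of_pos_left hE hd0
end

section
/- Let d ≥ 2 be an even integer and e = d/2. Let Λ = {X, Y} be a symbol of rank n which is an e-cocore, with s = |X|, t = |Y|, and suppose δ = s − t is a positive odd integer. Suppose there exists y ∈ Y with y + e ∉ X, and let y₀ be the largest such element of Y. Then 2(n − y₀) + #{y ∈ Y : y < y₀} + #{x ∈ X : y₀ − x > −e} ≥ 2δ. -/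
/-- A symbol `{A, B}` is an `e`-cocore if `x − e ∈ B` for every `x ∈ A` with `x ≥ e`,
and `y − e ∈ A` for every `y ∈ B` with `y ≥ e`. -/
def IsSymbolCocore (e : ℕ) (A B : Finset ℕ) : Prop :=
  (∀ x ∈ A, e ≤ x → x - e ∈ B) ∧ (∀ y ∈ B, e ≤ y → y - e ∈ A)

/-!
Split `A` at `y₀ + e` into `a` small and `m` large entries and `B` into `b` entries below `y₀`,
`y₀` itself and the entries above `y₀`. The cocore property together with the maximality of `y₀`
makes `x ↦ x - e` a bijection from the large entries of `A` onto the entries of `B` above `y₀`,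
so `|A| = a + m`, `|B| = b + m + 1`, and the large entries of `A` sum to `m e` more than the
entries of `B` above `y₀`. A set of `k` naturals, all at least `lo`, sums to at least
`k lo + k (k - 1) / 2`; applied to the three parts this bounds the rank from below, and with
`a ≤ y₀ + e`, `b ≤ y₀` the claimed inequality holds with slack
`(a - b - 2)² + 4 m (2 y₀ + e + 1 - a - b) ≥ 0`.
-/

open Finset

theorem Finset.sum_filter_lt_add_add_sum_filter_gt {α M : Type*} [LinearOrder α]
    [AddCommMonoid M] {s : Finset α} {k : α} (hk : k ∈ s) (f : α → M) :
    ∑ x ∈ s with x < k, f x + f k + ∑ x ∈ s with k < x, f x = ∑ x ∈ s, f x := by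
  rw [← sum_filter_add_sum_filter_not s (· < k), add_assoc]
  congr 1
  have hge : {x ∈ s | ¬x < k} = insert k {x ∈ s | k < x} := by
    ext x
    simp only [mem_filter, mem_insert, not_lt]
    constructor
    · rintro ⟨hx, hkx⟩
      exact hkx.eq_or_lt.imp Eq.symm (⟨hx, ·⟩)
    · rintro (rfl | ⟨hx, hkx⟩)
      exacts [⟨hk, le_rfl⟩, ⟨hx, hkx.le⟩]
  rw [hge, sum_insert (by simp)]

theorem Finset.card_filter_lt_le (s : Finset ℕ) (k : ℕ) : #{x ∈ s | x < k} ≤ k := by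
  simpa using card_le_card (show {x ∈ s | x < k} ⊆ range k from fun x hx => by simp_all)

theorem Finset.card_mul_le_two_mul_sum_of_le {s : Finset ℕ} {lo : ℕ} (h : ∀ x ∈ s, lo ≤ x) :
    (#s : ℤ) * (2 * lo + #s - 1) ≤ 2 * ∑ x ∈ s, (x : ℤ) := by
  induction s using Finset.induction_on_max with
  | empty => simp
  | insert a s ha ih =>
    have has : a ∉ s := fun h => (ha a h).false
    have hcard : #s + lo ≤ a := by
      have hsub : s ⊆ Ico lo a := fun x hx => mem_Ico.2 ⟨h x (mem_insert_of_mem hx), ha x hx⟩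
      have hlo := h a (mem_insert_self a s)
      have hsize := card_le_card hsub
      rw [Nat.card_Ico] at hsize
      omega
    have ih := ih fun x hx => h x (mem_insert_of_mem hx)
    rw [card_insert_of_notMem has, sum_insert has]
    push_cast
    nlinarith

theorem Finset.card_mul_card_sub_one_le_two_mul_sum (s : Finset ℕ) :
    (#s : ℤ) * (#s - 1) ≤ 2 * ∑ x ∈ s, (x : ℤ) := by
  simpa using card_mul_le_two_mul_sum_of_le (s := s) (lo := 0) (by simp)

theorem four_mul_sum_add_sum_le_srank (A B : Finset ℕ) :
    4 * (∑ x ∈ A, (x : ℤ) + ∑ y ∈ B, (y : ℤ)) ≤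
      4 * srank A B + ((#A + #B - 1 : ℕ) : ℤ) ^ 2 := by
  have h : 4 * (∑ x ∈ A, x + ∑ y ∈ B, y) ≤ 4 * srank A B + (#A + #B - 1) ^ 2 := by
    unfold srank
    omega
  have h := Nat.cast_le (α := ℤ) |>.mpr h
  push_cast at h
  exact h

theorem map_filter_gt_eq_filter_le {A B : Finset ℕ} {e y₀ : ℕ}
    (hA : ∀ x ∈ A, e ≤ x → x - e ∈ B) (hy₀ : y₀ + e ∉ A)
    (hmax : ∀ y ∈ B, y + e ∉ A → y ≤ y₀) :
    {y ∈ B | y₀ < y}.map (addRightEmbedding e) = {x ∈ A | y₀ + e ≤ x} := by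
  ext x
  simp only [mem_map, mem_filter, addRightEmbedding_apply]
  constructor
  · rintro ⟨y, ⟨hy, hy₀y⟩, rfl⟩
    refine ⟨?_, by omega⟩
    by_contra hyA
    exact (hmax y hy hyA).not_gt hy₀y
  · rintro ⟨hx, hy₀x⟩
    have hne : x ≠ y₀ + e := fun h => hy₀ (h ▸ hx)
    exact ⟨x - e, ⟨hA x hx (by omega), by omega⟩, by omega⟩

theorem perversity_le_of_sum_bounds {a b m e y₀ n SA SB H : ℤ}
    (hSA : a * (a - 1) ≤ 2 * SA) (hSB : b * (b - 1) ≤ 2 * SB)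
    (hH : m * (2 * (y₀ + 1) + m - 1) ≤ 2 * H)
    (ha : a ≤ y₀ + e) (hb : b ≤ y₀) (hm : 0 ≤ m)
    (hn : 4 * ((SA + (H + m * e)) + (SB + y₀ + H)) ≤ 4 * n + (a + b + 2 * m) ^ 2) :
    2 * ((a + m) - (b + 1 + m)) ≤ 2 * (n - y₀) + b + a := by
  linarith [sq_nonneg (a - b - 2), mul_nonneg hm (show 0 ≤ 2 * y₀ + e + 1 - a - b by linarith)]

theorem symplectic_perversity_lower_bound_general (d : ℕ)
    (A B : Finset ℕ) (hAB : IsSymbolCocore (d / 2) A B)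
    (hne : (B.filter fun y => y + d / 2 ∉ A).Nonempty)
    (y0 : ℕ) (hy0 : y0 = (B.filter fun y => y + d / 2 ∉ A).max' hne) :
    2 * ((A.card : ℤ) - (B.card : ℤ)) ≤
      2 * ((srank A B : ℤ) - (y0 : ℤ))
        + ((B.filter fun y => y < y0).card : ℤ)
        + ((A.filter fun x => x < y0 + d / 2).card : ℤ) := by
  set e := d / 2
  obtain ⟨hy0B, hy0A⟩ : y0 ∈ B ∧ y0 + e ∉ A := mem_filter.1 (hy0 ▸ max'_mem _ hne)
  have hupper := map_filter_gt_eq_filter_le hAB.1 hy0A fun y hy hyA =>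
    hy0 ▸ le_max' _ _ (mem_filter.2 ⟨hy, hyA⟩)
  have hsumA := sum_filter_add_sum_filter_not A (· < y0 + e) (fun x => (x : ℤ))
  have hcardA := card_filter_add_card_filter_not (s := A) (· < y0 + e)
  have hsumB := sum_filter_lt_add_add_sum_filter_gt hy0B (fun y => (y : ℤ))
  have hcardB := sum_filter_lt_add_add_sum_filter_gt hy0B (fun _ => (1 : ℕ))
  simp only [not_lt, ← hupper, sum_map, card_map, addRightEmbedding_apply, Nat.cast_add,
    sum_add_distrib, sum_const, smul_eq_mul, nsmul_eq_mul, mul_one] at hsumA hcardA hsumB hcardB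
  have hlowA := card_mul_card_sub_one_le_two_mul_sum {x ∈ A | x < y0 + e}
  have hlowB := card_mul_card_sub_one_le_two_mul_sum {y ∈ B | y < y0}
  have hhighB := card_mul_le_two_mul_sum_of_le (s := {y ∈ B | y0 < y}) (lo := y0 + 1)
    fun y hy => (mem_filter.1 hy).2
  have hrank := four_mul_sum_add_sum_le_srank A B
  have ha := card_filter_lt_le A (y0 + e)
  have hb := card_filter_lt_le B y0
  set a := #{x ∈ A | x < y0 + e}
  set b := #{y ∈ B | y < y0}
  set m := #{y ∈ B | y0 < y}
  rw [← hsumA, ← hsumB, ← hcardA, ← hcardB,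
    show a + m + (b + 1 + m) - 1 = a + b + 2 * m by omega] at hrank
  rw [← hcardA, ← hcardB]
  push_cast at hrank hhighB ⊢
  exact perversity_le_of_sum_bounds hlowA hlowB hhighB
    (by exact_mod_cast ha) (by exact_mod_cast hb) m.cast_nonneg hrank

/-- Let `d ≥ 2` be even, `e = d/2`, and `{A, B}` an `e`-cocore symbol of rank `n`
with `δ = |A| − |B|` a positive odd integer. If `y₀` is the largest element of
`{y ∈ B : y + e ∉ A}` (assumed nonempty), then
`2(n − y₀) + #{y ∈ B : y < y₀} + #{x ∈ A : y₀ − x > −e} ≥ 2δ`. -/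
theorem symplectic_perversity_lower_bound (d : ℕ) (hd : 2 ≤ d) (heven : d % 2 = 0)
    (A B : Finset ℕ) (hAB : IsSymbolCocore (d / 2) A B)
    (hδpos : (0 : ℤ) < (A.card : ℤ) - (B.card : ℤ))
    (hδodd : Odd ((A.card : ℤ) - (B.card : ℤ)))
    (hne : (B.filter fun y => y + d / 2 ∉ A).Nonempty)
    (y0 : ℕ) (hy0 : y0 = (B.filter fun y => y + d / 2 ∉ A).max' hne) :
    2 * ((A.card : ℤ) - (B.card : ℤ)) ≤
      2 * ((srank A B : ℤ) - (y0 : ℤ))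
        + ((B.filter fun y => y < y0).card : ℤ)
        + ((A.filter fun x => x < y0 + d / 2).card : ℤ) :=
  symplectic_perversity_lower_bound_general d A B hAB hne y0 hy0
end

section
/- Let e > 1 be an odd integer and let X be a nonempty β-set of rank n such that the set X' = {x ∈ X : x + e ∉ X} has exactly e elements. Let Y be the set of even elements of X', Z the set of odd elements of X', and m = | |Z| − |Y| |; for x ∈ X write λ(x) = x − #{x' ∈ X : x' < x}. Then m ≤ e, and: (i) if there exists a non-negative integer g ∉ X with g < max X and (max X) − g ≥ e + 1, then n ≥ e + 1 and n − λ(x) ≥ e for every x ∈ X with x ≠ max X; (ii) if max X = 2e − 1, then Σ_{x ∈ X, x even} λ(x) ≥ m − 2 whenever |Y| > |Z|, and Σ_{x ∈ X, x odd} λ(x) ≥ m − 2 whenever |Z| > |Y|. -/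
/-!
For `x ∈ S` the part `λ(x)` is the number of gaps of `S` below `x`, and the rank is `Σ λ(x)`.

(i) Every bead of `S` strictly between the gap `g` and `M = max S` has `λ ≥ 1`, and `λ(M)` counts
the gaps in `[g, M)`; together these beads contribute at least `M - g ≥ e + 1`, and still
`M - g - 1` after any one bead other than `M` is removed.

(ii) Now `S` lies on a two-row abacus with runners `k` and `k + e`, `k < e`. As `|X'| = e`, every
runner carries a bead and `X'` is the set of lowest beads of the runners, which gives
`|Z| - |Y| = 2E - 2N - 1`, where `E` and `N` count the even and odd runners with a bead in the
second row (the runner `e - 1` is one of them). A second-row bead `k + e` lies above the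
second-row positions `j + e`, `j < k`; so if `v k` counts the runners `j < k` of the other parity
and `c` bounds the number of those carrying a second-row bead, its part is at least `v k - c`. As
`v` is injective on runners of one parity, the positive values `v k - c` are distinct, so over a set
`K` of runners they sum to at least `1 + 2 + ⋯`, hence to at least `2|K| - 2c - 3`.
-/

open Finset

def gapsBelow (S : Finset ℕ) (x : ℕ) : ℕ := #{y ∈ range x | y ∉ S}

lemma card_filter_lt_add_gapsBelow (S : Finset ℕ) (x : ℕ) :
    #{y ∈ S | y < x} + gapsBelow S x = x := by
  have h : {y ∈ S | y < x} = {y ∈ range x | y ∈ S} := by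
    ext y; simp [and_comm]
  rw [gapsBelow, h, card_filter_add_card_filter_not, card_range]

lemma sub_card_filter_lt_eq_gapsBelow (S : Finset ℕ) (x : ℕ) :
    (x : ℤ) - #{y ∈ S | y < x} = gapsBelow S x := by
  have := card_filter_lt_add_gapsBelow S x
  omega

lemma sum_card_filter_lt (S : Finset ℕ) :
    ∑ x ∈ S, #{y ∈ S | y < x} = ∑ i ∈ range #S, i := by
  induction S using Finset.induction_on_max with
  | empty => simp
  | insert a s has ih =>
    have ha : a ∉ s := fun h => (has a h).false
    have hs : ∀ x ∈ s, {y ∈ insert a s | y < x} = {y ∈ s | y < x} := fun x hx => by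
      rw [filter_insert, if_neg (has x hx).asymm]
    have hlast : {y ∈ insert a s | y < a} = s := by
      rw [filter_insert, if_neg (lt_irrefl a), filter_true_of_mem has]
    rw [sum_insert ha, hlast, sum_congr rfl fun x hx => congrArg card (hs x hx), ih,
      card_insert_of_notMem ha, sum_range_succ, add_comm]

lemma brank_eq_sum_gapsBelow (S : Finset ℕ) : brank S = ∑ x ∈ S, gapsBelow S x := by
  have hle : ∀ x ∈ S, #{y ∈ S | y < x} ≤ x := fun x _ =>
    (card_filter_lt_add_gapsBelow S x).le.trans' (Nat.le_add_right _ _)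
  rw [brank, ← sum_range_id, ← sum_card_filter_lt, ← sum_tsub_distrib S hle]
  refine sum_congr rfl fun x _ => ?_
  have := card_filter_lt_add_gapsBelow S x
  omega

lemma two_mul_card_le_sum_tsub (V : Finset ℕ) (c : ℕ) :
    2 * #V ≤ ∑ x ∈ V, (x - c) + 2 * c + 3 := by
  induction V using Finset.induction_on_max with
  | empty => simp
  | insert a s has ih =>
    have ha : a ∉ s := fun h => (has a h).false
    have hs : #s ≤ a := (card_le_card fun x hx => mem_range.2 (has x hx)).trans (card_range a).le
    rw [sum_insert ha, card_insert_of_notMem ha]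
    omega

lemma two_mul_card_le_sum_of_injOn {ι : Type*} {K : Finset ι} {v w : ι → ℕ} {c : ℕ}
    (hv : Set.InjOn v K) (hvw : ∀ k ∈ K, v k ≤ w k + c) :
    2 * #K ≤ ∑ k ∈ K, w k + 2 * c + 3 := by
  classical
  calc 2 * #K = 2 * #(K.image v) := by rw [card_image_of_injOn hv]
    _ ≤ ∑ x ∈ K.image v, (x - c) + 2 * c + 3 := two_mul_card_le_sum_tsub _ c
    _ = ∑ k ∈ K, (v k - c) + 2 * c + 3 := by rw [sum_image hv]
    _ ≤ ∑ k ∈ K, w k + 2 * c + 3 := by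
      gcongr with k hk
      exact Nat.sub_le_of_le_add (hvw k hk)

lemma one_le_gapsBelow {S : Finset ℕ} {g x : ℕ} (hg : g ∉ S) (hgx : g < x) :
    1 ≤ gapsBelow S x :=
  card_pos.2 ⟨g, mem_filter.2 ⟨mem_range.2 hgx, hg⟩⟩

lemma sub_le_gapsBelow_add_card {S : Finset ℕ} {g x : ℕ} (hg : g ∉ S) :
    x - g ≤ gapsBelow S x + #{y ∈ S | g < y ∧ y < x} := by
  have hsub : Ico g x ⊆ {y ∈ range x | y ∉ S} ∪ {y ∈ S | g < y ∧ y < x} := by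
    intro y hy
    obtain ⟨hgy, hyx⟩ := mem_Ico.1 hy
    by_cases hyS : y ∈ S
    · have hgy' : g < y := lt_of_le_of_ne hgy (by rintro rfl; exact hg hyS)
      exact mem_union_right _ (mem_filter.2 ⟨hyS, hgy', hyx⟩)
    · exact mem_union_left _ (mem_filter.2 ⟨mem_range.2 hyx, hyS⟩)
  simpa [gapsBelow] using (card_le_card hsub).trans (card_union_le _ _)

lemma sub_le_sum_gapsBelow_sdiff_add_card {S T : Finset ℕ} {g M : ℕ} (hg : g ∉ S) (hM : M ∈ S)
    (hMT : M ∉ T) : M - g ≤ ∑ x ∈ S \ T, gapsBelow S x + #T := by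
  set F := {y ∈ S | g < y ∧ y < M}
  have hMF : M ∉ F \ T := fun h => (mem_filter.1 (mem_sdiff.1 h).1).2.2.false
  have hFT : #(F \ T) ≤ ∑ x ∈ F \ T, gapsBelow S x := by
    rw [card_eq_sum_ones]
    exact sum_le_sum fun x hx => one_le_gapsBelow hg (mem_filter.1 (mem_sdiff.1 hx).1).2.1
  have hsub : insert M (F \ T) ⊆ S \ T :=
    insert_subset (mem_sdiff.2 ⟨hM, hMT⟩) (sdiff_subset_sdiff (filter_subset _ _) subset_rfl)
  calc M - g ≤ gapsBelow S M + #F := sub_le_gapsBelow_add_card hg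
    _ ≤ gapsBelow S M + #(F \ T) + #T := by
      rw [add_assoc]; exact Nat.add_le_add_left card_le_card_sdiff_add_card _
    _ ≤ ∑ x ∈ insert M (F \ T), gapsBelow S x + #T := by
      rw [sum_insert hMF]; gcongr
    _ ≤ ∑ x ∈ S \ T, gapsBelow S x + #T := by gcongr

lemma card_filter_range_mod_two_eq_zero (n : ℕ) : #{k ∈ range n | k % 2 = 0} = (n + 1) / 2 := by
  induction n with
  | zero => simp
  | succ n ih =>
    rw [range_add_one, filter_insert]
    split_ifs with h
    · rw [card_insert_of_notMem (by simp), ih]; omega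
    · rw [ih]; omega

lemma card_filter_range_mod_two_eq_one (n : ℕ) : #{k ∈ range n | k % 2 = 1} = n / 2 := by
  induction n with
  | zero => simp
  | succ n ih =>
    rw [range_add_one, filter_insert]
    split_ifs with h
    · rw [card_insert_of_notMem (by simp), ih]; omega
    · rw [ih]; omega

section Abacus

variable {S : Finset ℕ} {e : ℕ}

/-- On the two-row abacus with runners `0, …, e - 1`, runner `k` holds the positions `k` and
`k + e`; this is the lower of its beads, or `k` if the runner is empty. -/
def lowestBead (S : Finset ℕ) (e k : ℕ) : ℕ := if k + e ∈ S then k + e else k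

lemma lowestBead_injOn : Set.InjOn (lowestBead S e) (range e) := by
  intro a ha b hb hab
  simp only [coe_range, Set.mem_Iio] at ha hb
  unfold lowestBead at hab
  split_ifs at hab <;> omega

lemma filter_add_notMem_subset_image_lowestBead (hS : ∀ x ∈ S, x < 2 * e) :
    {x ∈ S | x + e ∉ S} ⊆ (range e).image (lowestBead S e) := by
  intro x hx
  obtain ⟨hxS, hxe⟩ := mem_filter.1 hx
  rw [mem_image]
  by_cases hlt : x < e
  · exact ⟨x, mem_range.2 hlt, if_neg hxe⟩
  · refine ⟨x - e, mem_range.2 (by have := hS x hxS; omega), ?_⟩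
    rw [lowestBead, Nat.sub_add_cancel (not_lt.1 hlt), if_pos hxS]

lemma filter_add_notMem_eq_image_lowestBead (hS : ∀ x ∈ S, x < 2 * e)
    (hX' : #{x ∈ S | x + e ∉ S} = e) :
    {x ∈ S | x + e ∉ S} = (range e).image (lowestBead S e) :=
  eq_of_subset_of_card_le (filter_add_notMem_subset_image_lowestBead hS)
    (card_image_le.trans (by rw [card_range, hX']))

lemma card_filter_filter_add_notMem (hS : ∀ x ∈ S, x < 2 * e) (hX' : #{x ∈ S | x + e ∉ S} = e)
    (P : ℕ → Prop) [DecidablePred P] :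
    #{x ∈ {x ∈ S | x + e ∉ S} | P x} =
      #{k ∈ range e | k + e ∈ S ∧ P (k + e)} + #{k ∈ range e | k + e ∉ S ∧ P k} := by
  have hin : {k ∈ {k ∈ range e | P (lowestBead S e k)} | k + e ∈ S} =
      {k ∈ range e | k + e ∈ S ∧ P (k + e)} := by
    ext k; simp only [mem_filter]; by_cases h : k + e ∈ S <;> simp [lowestBead, h]
  have hout : {k ∈ {k ∈ range e | P (lowestBead S e k)} | k + e ∉ S} =
      {k ∈ range e | k + e ∉ S ∧ P k} := by
    ext k; simp only [mem_filter]; by_cases h : k + e ∈ S <;> simp [lowestBead, h]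
  rw [filter_add_notMem_eq_image_lowestBead hS hX', filter_image,
    card_image_of_injOn (lowestBead_injOn.mono (filter_subset _ _)),
    ← card_filter_add_card_filter_not (p := fun k => k + e ∈ S), hin, hout]

def secondRowRunners (S : Finset ℕ) (e p : ℕ) : Finset ℕ :=
  {k ∈ range e | k + e ∈ S ∧ k % 2 = p}

lemma card_secondRowRunners_add (p : ℕ) :
    #(secondRowRunners S e p) + #{k ∈ range e | k + e ∉ S ∧ k % 2 = p} =
      #{k ∈ range e | k % 2 = p} := by
  rw [← card_filter_add_card_filter_not (s := {k ∈ range e | k % 2 = p})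
    (p := fun k => k + e ∈ S), filter_filter, filter_filter, secondRowRunners]
  simp only [and_comm]

lemma card_odd_sub_card_even (hodd : Odd e) (hS : ∀ x ∈ S, x < 2 * e)
    (hX' : #{x ∈ S | x + e ∉ S} = e) :
    (#{x ∈ {x ∈ S | x + e ∉ S} | x % 2 = 1} : ℤ) - #{x ∈ {x ∈ S | x + e ∉ S} | x % 2 = 0} =
      2 * #(secondRowRunners S e 0) - 2 * #(secondRowRunners S e 1) - 1 := by
  have hshift : ∀ p q, p + q = 1 →
      {k ∈ range e | k + e ∈ S ∧ (k + e) % 2 = p} = secondRowRunners S e q := fun p q hpq =>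
    filter_congr fun k _ => and_congr_right fun _ => by obtain ⟨t, rfl⟩ := hodd; omega
  have h0 := card_secondRowRunners_add (S := S) (e := e) 0
  have h1 := card_secondRowRunners_add (S := S) (e := e) 1
  rw [card_filter_range_mod_two_eq_zero] at h0
  rw [card_filter_range_mod_two_eq_one] at h1
  rw [card_filter_filter_add_notMem hS hX', card_filter_filter_add_notMem hS hX', hshift 1 0 rfl,
    hshift 0 1 rfl]
  obtain ⟨t, rfl⟩ := hodd
  omega

lemma card_filter_range_mod_two_le_gapsBelow_add (k p : ℕ) :
    #{j ∈ range k | j % 2 = p} ≤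
      gapsBelow S (k + e) + #{j ∈ range k | j + e ∈ S ∧ j % 2 = p} := by
  have hgaps : #{j ∈ range k | j + e ∉ S ∧ j % 2 = p} ≤ gapsBelow S (k + e) :=
    card_le_card_of_injOn (· + e)
      (fun j hj => by
        simp only [coe_filter, mem_range, Set.mem_ofPred_eq] at hj ⊢
        exact ⟨by omega, hj.2.1⟩)
      (add_left_injective e).injOn
  rw [← card_filter_add_card_filter_not (s := {j ∈ range k | j % 2 = p})
    (p := fun j => j + e ∈ S), filter_filter, filter_filter, add_comm]
  simp only [and_comm (a := _ % 2 = p)]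
  omega

lemma two_mul_card_le_sum_gapsBelow {K : Finset ℕ} {v : ℕ → ℕ} {c q : ℕ} (hv : Set.InjOn v K)
    (hK : ∀ k ∈ K, k + e ∈ S ∧ (k + e) % 2 = q) (hvc : ∀ k ∈ K, v k ≤ gapsBelow S (k + e) + c) :
    2 * #K ≤ ∑ x ∈ S with x % 2 = q, gapsBelow S x + 2 * c + 3 := by
  have hsub : K.image (· + e) ⊆ {x ∈ S | x % 2 = q} := by
    intro x hx
    obtain ⟨k, hk, rfl⟩ := mem_image.1 hx
    exact mem_filter.2 (hK k hk)
  calc 2 * #K ≤ ∑ k ∈ K, gapsBelow S (k + e) + 2 * c + 3 := two_mul_card_le_sum_of_injOn hv hvc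
    _ = ∑ x ∈ K.image (· + e), gapsBelow S x + 2 * c + 3 := by
      rw [sum_image (add_left_injective e).injOn]
    _ ≤ ∑ x ∈ S with x % 2 = q, gapsBelow S x + 2 * c + 3 := by gcongr

lemma two_mul_card_secondRowRunners_one_le (hodd : Odd e) (htop : 2 * e - 1 ∈ S) :
    2 * #(secondRowRunners S e 1) ≤
      ∑ x ∈ S with x % 2 = 0, gapsBelow S x + 2 * #(secondRowRunners S e 0) + 1 := by
  obtain ⟨t, rfl⟩ := hodd
  have hlast : 2 * t ∈ secondRowRunners S (2 * t + 1) 0 :=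
    mem_filter.2 ⟨mem_range.2 (by omega), by convert htop using 1; omega, by omega⟩
  have hpos := card_pos.2 ⟨_, hlast⟩
  suffices 2 * #(secondRowRunners S (2 * t + 1) 1) ≤ ∑ x ∈ S with x % 2 = 0, gapsBelow S x +
      2 * (#(secondRowRunners S (2 * t + 1) 0) - 1) + 3 by omega
  refine two_mul_card_le_sum_gapsBelow (e := 2 * t + 1) (v := fun k => (k + 1) / 2) ?_ ?_
    fun k hk => ?_
  · intro a ha b hb hab
    simp only [secondRowRunners, coe_filter, mem_range, Set.mem_ofPred_eq] at ha hb hab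
    omega
  · intro k hk
    simp only [secondRowRunners, mem_filter, mem_range] at hk
    exact ⟨hk.2.1, by omega⟩
  · simp only [secondRowRunners, mem_filter, mem_range] at hk
    have hbelow : {j ∈ range k | j + (2 * t + 1) ∈ S ∧ j % 2 = 0} ⊆
        (secondRowRunners S (2 * t + 1) 0).erase (2 * t) := by
      intro j hj
      simp only [secondRowRunners, mem_erase, mem_filter, mem_range] at hj ⊢
      exact ⟨by omega, by omega, hj.2⟩
    have := card_filter_range_mod_two_le_gapsBelow_add (S := S) (e := 2 * t + 1) k 0
    rw [card_filter_range_mod_two_eq_zero] at this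
    have := (card_le_card hbelow).trans_eq (card_erase_of_mem hlast)
    omega

lemma two_mul_card_secondRowRunners_zero_le (hodd : Odd e) :
    2 * #(secondRowRunners S e 0) ≤
      ∑ x ∈ S with x % 2 = 1, gapsBelow S x + 2 * #(secondRowRunners S e 1) + 3 := by
  obtain ⟨t, rfl⟩ := hodd
  refine two_mul_card_le_sum_gapsBelow (e := 2 * t + 1) (v := fun k => k / 2) ?_ ?_ fun k hk => ?_
  · intro a ha b hb hab
    simp only [secondRowRunners, coe_filter, mem_range, Set.mem_ofPred_eq] at ha hb hab
    omega
  · intro k hk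
    simp only [secondRowRunners, mem_filter, mem_range] at hk
    exact ⟨hk.2.1, by omega⟩
  · simp only [secondRowRunners, mem_filter, mem_range] at hk
    have hbelow : {j ∈ range k | j + (2 * t + 1) ∈ S ∧ j % 2 = 1} ⊆
        secondRowRunners S (2 * t + 1) 1 := by
      intro j hj
      simp only [secondRowRunners, mem_filter, mem_range] at hj ⊢
      exact ⟨by omega, hj.2⟩
    have := card_filter_range_mod_two_le_gapsBelow_add (S := S) (e := 2 * t + 1) k 1
    rw [card_filter_range_mod_two_eq_one] at this
    have := card_le_card hbelow
    omega

end Abacus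

theorem beta_set_helper_lemma_general (e : ℕ) (hodd : Odd e)
    (S : Finset ℕ) (hS : S.Nonempty)
    (hX' : (S.filter fun x => x + e ∉ S).card = e)
    (m : ℤ)
    (hm : m = |(((S.filter fun x => x + e ∉ S).filter fun x => x % 2 = 1).card : ℤ)
        - (((S.filter fun x => x + e ∉ S).filter fun x => x % 2 = 0).card : ℤ)|) :
    m ≤ (e : ℤ) ∧
    ((∃ g : ℕ, g ∉ S ∧ g + (e + 1) ≤ S.max' hS) →
      (e : ℤ) + 1 ≤ (brank S : ℤ) ∧
        ∀ x ∈ S, x ≠ S.max' hS →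
          (e : ℤ) ≤ (brank S : ℤ) - ((x : ℤ) - ((S.filter (· < x)).card : ℤ))) ∧
    (S.max' hS = 2 * e - 1 →
      ((((S.filter fun x => x + e ∉ S).filter fun x => x % 2 = 1).card
          < ((S.filter fun x => x + e ∉ S).filter fun x => x % 2 = 0).card →
        m - 2 ≤ ∑ x ∈ S.filter (fun x => x % 2 = 0),
          ((x : ℤ) - ((S.filter (· < x)).card : ℤ))) ∧
      (((S.filter fun x => x + e ∉ S).filter fun x => x % 2 = 0).card
          < ((S.filter fun x => x + e ∉ S).filter fun x => x % 2 = 1).card →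
        m - 2 ≤ ∑ x ∈ S.filter (fun x => x % 2 = 1),
          ((x : ℤ) - ((S.filter (· < x)).card : ℤ))))) := by
  have hsplit := card_filter_add_card_filter_not (s := {x ∈ S | x + e ∉ S}) (p := (· % 2 = 1))
  simp only [Nat.mod_two_ne_one, hX'] at hsplit
  simp only [sub_card_filter_lt_eq_gapsBelow, brank_eq_sum_gapsBelow, ← Nat.cast_sum]
  refine ⟨?_, ?_, fun hmax => ?_⟩
  · rw [hm, abs_sub_le_iff]
    omega
  · rintro ⟨g, hg, hgM⟩
    have hM := S.max'_mem hS
    refine ⟨?_, fun x hx hxM => ?_⟩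
    · have := sub_le_sum_gapsBelow_sdiff_add_card (T := ∅) hg hM (notMem_empty _)
      rw [sdiff_empty, card_empty] at this
      omega
    · have := sub_le_sum_gapsBelow_sdiff_add_card (T := {x}) hg hM (by simpa using hxM.symm)
      rw [sdiff_singleton_eq_erase, card_singleton] at this
      rw [← sum_erase_add S _ hx, Nat.cast_add]
      omega
  · have hlt : ∀ x ∈ S, x < 2 * e := fun x hx => by
      have := (S.le_max' x hx).trans_eq hmax
      have := hodd.pos
      omega
    have hdiff := card_odd_sub_card_even hodd hlt hX'
    have h0 := two_mul_card_secondRowRunners_one_le hodd (hmax ▸ S.max'_mem hS)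
    have h1 := two_mul_card_secondRowRunners_zero_le (S := S) hodd
    constructor <;> intro h <;> rw [hm]
    · rw [abs_of_neg (by omega)]
      omega
    · rw [abs_of_pos (by omega)]
      omega

/-- Let `e > 1` be odd and `S` a nonempty β-set of rank `n` such that
`X' = {x ∈ S : x + e ∉ S}` has exactly `e` elements. Let `Y` and `Z` be the even and odd
elements of `X'` and `m = ||Z| − |Y||`; write `λ(x) = x − #{x' ∈ S : x' < x}`. Then
`m ≤ e`, and:
(i) if there is a non-negative integer `g ∉ S` with `g < max S` and `max S − g ≥ e + 1`,
then `n ≥ e + 1` and `n − λ(x) ≥ e` for every `x ∈ S` with `x ≠ max S`;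
(ii) if `max S = 2e − 1`, then `Σ_{x ∈ S even} λ(x) ≥ m − 2` whenever `|Y| > |Z|`, and
`Σ_{x ∈ S odd} λ(x) ≥ m − 2` whenever `|Z| > |Y|`. -/
theorem beta_set_helper_lemma (e : ℕ) (he : 1 < e) (hodd : Odd e)
    (S : Finset ℕ) (hS : S.Nonempty)
    (hX' : (S.filter fun x => x + e ∉ S).card = e)
    (m : ℤ)
    (hm : m = |(((S.filter fun x => x + e ∉ S).filter fun x => x % 2 = 1).card : ℤ)
        - (((S.filter fun x => x + e ∉ S).filter fun x => x % 2 = 0).card : ℤ)|) :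
    m ≤ (e : ℤ) ∧
    ((∃ g : ℕ, g ∉ S ∧ g + (e + 1) ≤ S.max' hS) →
      (e : ℤ) + 1 ≤ (brank S : ℤ) ∧
        ∀ x ∈ S, x ≠ S.max' hS →
          (e : ℤ) ≤ (brank S : ℤ) - ((x : ℤ) - ((S.filter (· < x)).card : ℤ))) ∧
    (S.max' hS = 2 * e - 1 →
      ((((S.filter fun x => x + e ∉ S).filter fun x => x % 2 = 1).card
          < ((S.filter fun x => x + e ∉ S).filter fun x => x % 2 = 0).card →
        m - 2 ≤ ∑ x ∈ S.filter (fun x => x % 2 = 0),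
          ((x : ℤ) - ((S.filter (· < x)).card : ℤ))) ∧
      (((S.filter fun x => x + e ∉ S).filter fun x => x % 2 = 0).card
          < ((S.filter fun x => x + e ∉ S).filter fun x => x % 2 = 1).card →
        m - 2 ≤ ∑ x ∈ S.filter (fun x => x % 2 = 1),
          ((x : ℤ) - ((S.filter (· < x)).card : ℤ))))) :=
  beta_set_helper_lemma_general e hodd S hS hX' m hm
end
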